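/- arXiv:cs/0101024 — 5 statements merged into one kernel-verified Lean document; each statement's English description precedes it below -/
import Mathlib

section
/- For any n ≥ 1, any 1 ≤ i ≤ n, and any 1 ≤ x ≤ i, the conditional expectation of σ(i) given that x_i = x equals ((n+1)/(i+1))·x. Equivalently, Σ over permutations σ of {1,…,n} with x_i(σ) = x of σ(i) equals ((n+1)·x/(i+1)) · (n!/i). -/
open Finset

/-- `rnk σ i` is the final (1-based) rank of the `i`-th (1-based) input under the
permutation `σ`; junk value `0` out of range. -/
def rnk {n : ℕ} (σ : Equiv.Perm (Fin n)) (i : ℕ) : ℕ :=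
  if h : i - 1 < n then (σ ⟨i - 1, h⟩ : ℕ) + 1 else 0

/-- `relRank σ i` is the relative rank `x_i` of the `i`-th input among the first `i` inputs:
`x_i = |{j : 1 ≤ j ≤ i ∧ σ(j) ≤ σ(i)}|`. -/
def relRank {n : ℕ} (σ : Equiv.Perm (Fin n)) (i : ℕ) : ℕ :=
  ((Finset.Icc 1 i).filter fun j => rnk σ j ≤ rnk σ i).card

/-- Algorithm OP's active intervals: interval `i` (for `1 ≤ i ≤ n-1`) is active iff
`2 x_i < i + 1`, or `2 x_i = i + 1` and `i ≥ 2` and interval `i-1` is active. -/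
def opActive {n : ℕ} (σ : Equiv.Perm (Fin n)) : ℕ → Bool
  | 0 => false
  | i + 1 =>
    (decide (2 * relRank σ (i + 1) < i + 2)) ||
      ((decide (2 * relRank σ (i + 1) = i + 2)) && (decide (2 ≤ i + 1)) && opActive σ i)

/-- OP's profit `P_OP = Σ_{i=1}^{n-1} (σ(i+1) − σ(i))` over the active intervals `i`. -/
noncomputable def popProfit {n : ℕ} (σ : Equiv.Perm (Fin n)) : ℝ :=
  ∑ i ∈ Finset.Icc 1 (n - 1),
    if opActive σ i then ((rnk σ (i + 1) : ℝ) - rnk σ i) else 0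

/-- Expected profit of algorithm OP over a uniformly random permutation of `{1,…,n}`. -/
noncomputable def expPOP (n : ℕ) : ℝ :=
  (∑ σ : Equiv.Perm (Fin n), popProfit σ) / (n.factorial : ℝ)

/-- Harmonic number `H m = Σ_{j=1}^m 1/j`. -/
noncomputable def harm (m : ℕ) : ℝ := ∑ j ∈ Finset.Icc 1 m, (1 : ℝ) / j

/-- `patternRank σ i j` is the value at `j` of the prefix pattern `pattern_i(σ)`:
`|{j' : 1 ≤ j' ≤ i ∧ σ(j') ≤ σ(j)}|`. -/
def patternRank {n : ℕ} (σ : Equiv.Perm (Fin n)) (i j : ℕ) : ℕ :=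
  ((Finset.Icc 1 i).filter fun j' => rnk σ j' ≤ rnk σ j).card

-- insertion
def insPerm {n : ℕ} (τ : Equiv.Perm (Fin n)) (v : Fin (n+1)) : Equiv.Perm (Fin (n+1)) :=
  (finSuccEquivLast.trans ((τ.optionCongr).trans (finSuccEquiv' v).symm))

lemma insPerm_last {n : ℕ} (τ : Equiv.Perm (Fin n)) (v : Fin (n+1)) :
    insPerm τ v (Fin.last n) = v := by
  simp [insPerm]

lemma insPerm_castSucc {n : ℕ} (τ : Equiv.Perm (Fin n)) (v : Fin (n+1)) (k : Fin n) :
    insPerm τ v (Fin.castSucc k) = v.succAbove (τ k) := by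
  simp [insPerm]

lemma insPerm_bijective {n : ℕ} :
    Function.Bijective (fun p : Equiv.Perm (Fin n) × Fin (n+1) => insPerm p.1 p.2) := by
  rw [Fintype.bijective_iff_injective_and_card]
  constructor
  · rintro ⟨τ, v⟩ ⟨τ', v'⟩ h
    simp only at h
    have hv : v = v' := by
      have := congrArg (fun σ : Equiv.Perm (Fin (n+1)) => σ (Fin.last n)) h
      simpa [insPerm_last] using this
    subst hv
    have hτ : τ = τ' := by
      apply Equiv.ext; intro k
      have := congrArg (fun σ : Equiv.Perm (Fin (n+1)) => σ (Fin.castSucc k)) h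
      simp only [insPerm_castSucc] at this
      exact Fin.succAbove_right_injective this
    simp [hτ]
  · simp [Fintype.card_perm, Nat.factorial_succ, Nat.mul_comm]

lemma rnk_eq {n : ℕ} (σ : Equiv.Perm (Fin n)) (j : ℕ) (h2 : j - 1 < n) :
    rnk σ j = (σ ⟨j-1, h2⟩ : ℕ) + 1 := by
  rw [rnk, dif_pos]

lemma rnk_insPerm {n : ℕ} (τ : Equiv.Perm (Fin n)) (v : Fin (n+1)) (j : ℕ)
    (h2 : j - 1 < n) :
    rnk (insPerm τ v) j = (v.succAbove (τ ⟨j-1, h2⟩) : ℕ) + 1 := by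
  rw [rnk_eq _ j (by omega)]
  congr 2
  have : (⟨j-1, by omega⟩ : Fin (n+1)) = Fin.castSucc ⟨j-1, h2⟩ := rfl
  rw [this, insPerm_castSucc]

lemma relRank_insPerm {n : ℕ} (τ : Equiv.Perm (Fin n)) (v : Fin (n+1)) (i : ℕ)
    (h1 : 1 ≤ i) (h2 : i ≤ n) :
    relRank (insPerm τ v) i = relRank τ i := by
  unfold relRank
  congr 1
  apply Finset.filter_congr
  intro j hj
  simp only [Finset.mem_Icc] at hj
  have hji : j - 1 < n := by omega
  have hii : i - 1 < n := by omega
  rw [rnk_insPerm τ v j hji, rnk_insPerm τ v i hii, rnk_eq τ j hji, rnk_eq τ i hii]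
  simp only [Nat.add_le_add_iff_right, ← Fin.le_def, Fin.succAbove_le_succAbove_iff]

lemma sum_succAbove {n : ℕ} (w : Fin n) :
    ∑ v : Fin (n+1), ((v.succAbove w : ℕ) + 1) = (n + 2) * (w + 1) := by
  have key : ∀ v : Fin (n+1), ((v.succAbove w : Fin (n+1)) : ℕ)
      = if (w : ℕ) < v then (w : ℕ) else (w : ℕ) + 1 := by
    intro v
    rw [Fin.succAbove]
    split_ifs with h h' h'
    · rfl
    · exact absurd h (by simpa [Fin.lt_def] using h')
    · exact absurd (by simpa [Fin.lt_def] using h') h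
    · rfl
  simp only [key]
  rw [Fin.sum_univ_eq_sum_range (fun v => (if (w : ℕ) < v then (w : ℕ) else (w : ℕ) + 1) + 1)]
  have hw : (w : ℕ) < n := w.isLt
  rw [← Finset.sum_range_add_sum_Ico _ (show (w : ℕ) + 1 ≤ n + 1 by omega)]
  have e1 : ∑ v ∈ Finset.range ((w : ℕ) + 1),
      ((if (w : ℕ) < v then (w : ℕ) else (w : ℕ) + 1) + 1) = ((w : ℕ) + 1) * ((w : ℕ) + 2) := by
    rw [Finset.sum_congr rfl (fun v hv => ?_), Finset.sum_const, Finset.card_range, smul_eq_mul]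
    simp only [Finset.mem_range] at hv
    rw [if_neg (by omega)]
  have e2 : ∑ v ∈ Finset.Ico ((w : ℕ) + 1) (n + 1),
      ((if (w : ℕ) < v then (w : ℕ) else (w : ℕ) + 1) + 1) = (n - (w : ℕ)) * ((w : ℕ) + 1) := by
    rw [Finset.sum_congr rfl (fun v hv => ?_), Finset.sum_const, Nat.card_Ico, smul_eq_mul]
    · congr 1; omega
    simp only [Finset.mem_Ico] at hv
    rw [if_pos (by omega)]
  rw [e1, e2]
  have : (w : ℕ) + 2 + (n - (w : ℕ)) = n + 2 := by omega
  calc ((w : ℕ) + 1) * ((w : ℕ) + 2) + (n - (w : ℕ)) * ((w : ℕ) + 1)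
      = ((w : ℕ) + 2 + (n - (w : ℕ))) * ((w : ℕ) + 1) := by ring
    _ = (n + 2) * ((w : ℕ) + 1) := by rw [this]


def Nc (n i x : ℕ) : ℕ :=
  (Finset.univ.filter (fun σ : Equiv.Perm (Fin n) => relRank σ i = x)).card

def Sc (n i x : ℕ) : ℕ :=
  ∑ σ ∈ Finset.univ.filter (fun σ : Equiv.Perm (Fin n) => relRank σ i = x), rnk σ i

lemma Nc_succ (n i x : ℕ) (h1 : 1 ≤ i) (h2 : i ≤ n) :
    Nc (n+1) i x = (n+1) * Nc n i x := by
  rw [Nc, Nc, Finset.card_filter, Finset.card_filter]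
  rw [← Fintype.sum_bijective _ insPerm_bijective
    (fun p : Equiv.Perm (Fin n) × Fin (n+1) =>
      if relRank (insPerm p.1 p.2) i = x then 1 else 0) _ (fun p => rfl)]
  rw [Fintype.sum_prod_type]
  rw [Finset.mul_sum]
  apply Finset.sum_congr rfl
  intro τ _
  simp only [relRank_insPerm τ _ i h1 h2]
  split_ifs <;> simp

lemma Sc_succ (n i x : ℕ) (h1 : 1 ≤ i) (h2 : i ≤ n) :
    Sc (n+1) i x = (n+2) * Sc n i x := by
  rw [Sc, Sc, Finset.sum_filter, Finset.sum_filter]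
  rw [← Fintype.sum_bijective _ insPerm_bijective
    (fun p : Equiv.Perm (Fin n) × Fin (n+1) =>
      if relRank (insPerm p.1 p.2) i = x then rnk (insPerm p.1 p.2) i else 0) _ (fun p => rfl)]
  rw [Fintype.sum_prod_type]
  rw [Finset.mul_sum]
  apply Finset.sum_congr rfl
  intro τ _
  have hii : i - 1 < n := by omega
  simp only [relRank_insPerm τ _ i h1 h2, rnk_insPerm τ _ i hii]
  split_ifs with h
  · rw [sum_succAbove (τ ⟨i-1, hii⟩), rnk_eq τ i hii]
  · simp

lemma relRank_top {n : ℕ} (hn : 1 ≤ n) (σ : Equiv.Perm (Fin n)) (hii : n - 1 < n) :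
    relRank σ n = (σ ⟨n-1, hii⟩ : ℕ) + 1 := by
  rw [relRank]
  rw [← Finset.card_range ((σ ⟨n-1, hii⟩ : ℕ) + 1)]
  apply Finset.card_nbij' (fun j => rnk σ j - 1)
      (fun w => if h : w < n then ((σ.symm ⟨w, h⟩ : ℕ) + 1) else 0)
  · intro j hj
    simp only [Finset.mem_coe, Finset.mem_filter, Finset.mem_Icc] at hj
    obtain ⟨⟨hj1, hj2⟩, hle⟩ := hj
    have hjn : j - 1 < n := by omega
    beta_reduce
    rw [rnk_eq σ j hjn] at hle ⊢
    rw [rnk_eq σ n hii] at hle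
    simp only [Finset.mem_coe, Finset.mem_range]
    omega
  · intro w hw
    simp only [Finset.mem_coe, Finset.mem_range] at hw
    have hwn : w < n := lt_of_lt_of_le hw (by omega)
    beta_reduce
    rw [dif_pos hwn]
    simp only [Finset.mem_coe, Finset.mem_filter, Finset.mem_Icc]
    have hlt : ((σ.symm ⟨w, hwn⟩ : Fin n) : ℕ) < n := Fin.isLt _
    refine ⟨⟨by omega, by omega⟩, ?_⟩
    have hidx : ((σ.symm ⟨w, hwn⟩ : ℕ) + 1) - 1 < n := by omega
    rw [rnk_eq σ _ hidx, rnk_eq σ n hii]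
    have : (⟨(σ.symm ⟨w, hwn⟩ : ℕ) + 1 - 1, hidx⟩ : Fin n) = σ.symm ⟨w, hwn⟩ := by
      apply Fin.ext; simp
    rw [this, Equiv.apply_symm_apply]
    simp only [add_le_add_iff_right, Fin.val_mk]
    omega
  · intro j hj
    simp only [Finset.mem_coe, Finset.mem_filter, Finset.mem_Icc] at hj
    obtain ⟨⟨hj1, hj2⟩, _⟩ := hj
    have hjn : j - 1 < n := by omega
    beta_reduce
    rw [rnk_eq σ j hjn]
    have hlt : ((σ ⟨j-1, hjn⟩ : Fin n) : ℕ) < n := Fin.isLt _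
    rw [show (σ ⟨j-1, hjn⟩ : ℕ) + 1 - 1 = (σ ⟨j-1, hjn⟩ : ℕ) from rfl]
    rw [dif_pos hlt]
    have : (⟨((σ ⟨j-1, hjn⟩ : Fin n) : ℕ), hlt⟩ : Fin n) = σ ⟨j-1, hjn⟩ := by
      apply Fin.ext; rfl
    rw [this, Equiv.symm_apply_apply]
    simp only [Fin.val_mk]
    omega
  · intro w hw
    simp only [Finset.mem_coe, Finset.mem_range] at hw
    have hwn : w < n := lt_of_lt_of_le hw (by omega)
    beta_reduce
    rw [dif_pos hwn]
    have hidx : ((σ.symm ⟨w, hwn⟩ : ℕ) + 1) - 1 < n := by omega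
    rw [rnk_eq σ _ hidx]
    have : (⟨(σ.symm ⟨w, hwn⟩ : ℕ) + 1 - 1, hidx⟩ : Fin n) = σ.symm ⟨w, hwn⟩ := by
      apply Fin.ext; simp
    rw [this, Equiv.apply_symm_apply]
    simp only [Fin.val_mk]
    omega


lemma Nc_base (i x : ℕ) (h1 : 1 ≤ i) (hx1 : 1 ≤ x) (hx2 : x ≤ i) :
    Nc i i x = (i-1).factorial := by
  obtain ⟨m, rfl⟩ : ∃ m, i = m + 1 := ⟨i - 1, by omega⟩
  have hii : m + 1 - 1 < m + 1 := by omega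
  have hcond : ∀ σ : Equiv.Perm (Fin (m+1)),
      relRank σ (m+1) = x ↔ σ (Fin.last m) = ⟨x - 1, by omega⟩ := by
    intro σ
    rw [relRank_top (by omega) σ hii]
    have : (⟨m + 1 - 1, hii⟩ : Fin (m+1)) = Fin.last m := rfl
    rw [this]
    constructor
    · intro h; apply Fin.ext; simp only [Fin.val_mk]; omega
    · intro h; rw [h]; simp only [Fin.val_mk]; omega
  rw [Nc, Finset.card_filter]
  rw [← Fintype.sum_bijective _ insPerm_bijective
    (fun p : Equiv.Perm (Fin m) × Fin (m+1) =>
      if relRank (insPerm p.1 p.2) (m+1) = x then 1 else 0) _ (fun p => rfl)]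
  simp only [hcond, insPerm_last]
  rw [Fintype.sum_prod_type]
  simp only [Finset.sum_ite_eq, Finset.mem_univ, if_pos]
  simp [Fintype.card_perm]

lemma Sc_base (i x : ℕ) (h1 : 1 ≤ i) (hx1 : 1 ≤ x) (hx2 : x ≤ i) :
    Sc i i x = x * (i-1).factorial := by
  have hii : i - 1 < i := by omega
  have : Sc i i x = x * Nc i i x := by
    rw [Sc, Finset.sum_filter, Nc, Finset.card_filter, Finset.mul_sum]
    apply Finset.sum_congr rfl
    intro σ _
    split_ifs with h
    · rw [rnk_eq σ i hii, ← relRank_top (by omega) σ hii, h, mul_one]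
    · simp
  rw [this, Nc_base i x h1 hx1 hx2]

lemma closed_form (i x : ℕ) (h1 : 1 ≤ i) (hx1 : 1 ≤ x) (hx2 : x ≤ i) :
    ∀ n, i ≤ n → Nc n i x * i = n.factorial ∧
      Sc n i x * (i * (i+1)) = x * (n+1).factorial := by
  refine Nat.le_induction ?_ ?_
  · constructor
    · rw [Nc_base i x h1 hx1 hx2]
      obtain ⟨m, rfl⟩ : ∃ m, i = m + 1 := ⟨i - 1, by omega⟩
      simp [Nat.factorial_succ, Nat.mul_comm]
    · rw [Sc_base i x h1 hx1 hx2]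
      obtain ⟨m, rfl⟩ : ∃ m, i = m + 1 := ⟨i - 1, by omega⟩
      simp only [Nat.add_sub_cancel, Nat.factorial_succ]
      ring
  · intro n hn ih
    constructor
    · rw [Nc_succ n i x h1 hn, Nat.factorial_succ]
      rw [mul_assoc, ih.1]
    · rw [Sc_succ n i x h1 hn, show (n+1+1) = n + 2 from rfl, Nat.factorial_succ]
      rw [mul_assoc, ih.2]
      ring

/-- For a uniformly random permutation `σ` of `{1,…,n}`, the conditional expectation of
`σ(i)` given `x_i = x` equals `((n+1)/(i+1))·x`; equivalently, the sum of `σ(i)` over all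
permutations with `x_i(σ) = x` equals `((n+1)·x/(i+1)) · (n!/i)`. -/
theorem stmt1 (n i x : ℕ) (hn : 1 ≤ n) (hi1 : 1 ≤ i) (hi2 : i ≤ n)
    (hx1 : 1 ≤ x) (hx2 : x ≤ i) :
    ((∑ σ ∈ Finset.univ.filter (fun σ : Equiv.Perm (Fin n) => relRank σ i = x),
          (rnk σ i : ℝ)) /
        ((Finset.univ.filter (fun σ : Equiv.Perm (Fin n) => relRank σ i = x)).card : ℝ)
        = (((n : ℝ) + 1) / ((i : ℝ) + 1)) * x) ∧
      (∑ σ ∈ Finset.univ.filter (fun σ : Equiv.Perm (Fin n) => relRank σ i = x),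
          (rnk σ i : ℝ))
        = (((n : ℝ) + 1) * x / ((i : ℝ) + 1)) * ((n.factorial : ℝ) / i) := by
  obtain ⟨hN, hS⟩ := closed_form i x hi1 hx1 hx2 n hi2
  have hsum : (∑ σ ∈ Finset.univ.filter (fun σ : Equiv.Perm (Fin n) => relRank σ i = x),
      (rnk σ i : ℝ)) = ((Sc n i x : ℕ) : ℝ) := by
    rw [Sc, Nat.cast_sum]
  have hcard : ((Finset.univ.filter
      (fun σ : Equiv.Perm (Fin n) => relRank σ i = x)).card : ℝ) = ((Nc n i x : ℕ) : ℝ) := rfl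
  have hNr : ((Nc n i x : ℕ) : ℝ) * i = (n.factorial : ℝ) := by exact_mod_cast hN
  have hSr : ((Sc n i x : ℕ) : ℝ) * ((i : ℝ) * ((i : ℝ) + 1))
      = (x : ℝ) * (((n : ℝ) + 1) * (n.factorial : ℝ)) := by
    have := hS
    rw [Nat.factorial_succ] at this
    exact_mod_cast this
  have hi0 : (i : ℝ) ≠ 0 := by positivity
  have hi10 : (i : ℝ) + 1 ≠ 0 := by positivity
  have hf0 : (n.factorial : ℝ) ≠ 0 := by positivity
  have hN0 : ((Nc n i x : ℕ) : ℝ) ≠ 0 := by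
    intro h0
    rw [h0, zero_mul] at hNr
    exact hf0 hNr.symm
  constructor
  · rw [hsum, hcard]
    have key : ((Sc n i x : ℕ) : ℝ) * ((i : ℝ) + 1) * i
        = ((n : ℝ) + 1) * x * ((Nc n i x : ℕ) : ℝ) * i := by
      linear_combination hSr - ((x : ℝ) * ((n : ℝ) + 1)) * hNr
    have key2 := mul_right_cancel₀ hi0 key
    field_simp
    linear_combination key2
  · rw [hsum]
    field_simp
    linear_combination hSr
end

section
/- For any r : {1,…,n} → ℝ, the maximum, over all k ≥ 0 and all valid selections 1 ≤ ℓ_1 < h_1 < ⋯ < ℓ_k < h_k ≤ n, of the profit Σ_{t=1}^{k} (r(h_t) − r(ℓ_t)) equals Σ_{j=1}^{n−1} max(r(j+1) − r(j), 0). -/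
open Finset

private lemma icc_eq_ico (n : ℕ) : Finset.Icc 1 (n - 1) = Finset.Ico 1 n := by
  cases n with
  | zero => simp
  | succ m => rw [Nat.succ_sub_one, ← Finset.Ico_add_one_right_eq_Icc]

private lemma tel (r : ℕ → ℝ) (l h : ℕ) (hlh : l ≤ h) :
    r h - r l = ∑ j ∈ Ico l h, (r (j + 1) - r j) := by
  induction h, hlh using Nat.le_induction with
  | base => simp
  | succ m hm ih =>
    rw [Finset.sum_Ico_succ_top (by omega), ← ih]; ring

private lemma chain (l h : ℕ → ℕ) (k : ℕ)
    (hl : ∀ t, 1 ≤ t → t ≤ k → l t < h t)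
    (hh : ∀ t, 1 ≤ t → t < k → h t < l (t + 1)) :
    ∀ t u, 1 ≤ t → t < u → u ≤ k → h t < l u := by
  intro t u ht htu huk
  induction u with
  | zero => omega
  | succ m ih =>
    rcases Nat.lt_or_ge t m with h1 | h1
    · have i1 := ih (by omega) (by omega)
      have i2 := hl m (by omega) (by omega)
      have i3 := hh m (by omega) (by omega)
      omega
    · have : t = m := by omega
      subst this
      exact hh t ht (by omega)

private lemma upper (r : ℕ → ℝ) : ∀ k n (l h : ℕ → ℕ),
    (∀ t, 1 ≤ t → t ≤ k → 1 ≤ l t ∧ l t < h t ∧ h t ≤ n) →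
    (∀ t, 1 ≤ t → t < k → h t < l (t + 1)) →
    ∑ t ∈ Icc 1 k, (r (h t) - r (l t)) ≤ ∑ j ∈ Ico 1 n, max (r (j + 1) - r j) 0 := by
  intro k
  induction k with
  | zero =>
    intro n l h _ _
    rw [show Finset.Icc 1 0 = ∅ by simp]
    simp only [Finset.sum_empty]
    exact Finset.sum_nonneg fun j _ => le_max_right _ _
  | succ k ih =>
    intro n l h hl hh
    obtain ⟨h1, h2, h3⟩ := hl (k + 1) (by omega) le_rfl
    have hchain : ∀ t, 1 ≤ t → t ≤ k → h t < l (k + 1) := by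
      intro t ht htk
      exact chain l h (k + 1) (fun s hs hsk => (hl s hs hsk).2.1) hh t (k + 1) ht
        (by omega) le_rfl
    have hsub : ∑ t ∈ Icc 1 k, (r (h t) - r (l t)) ≤
        ∑ j ∈ Ico 1 (l (k + 1) - 1), max (r (j + 1) - r j) 0 := by
      apply ih (l (k + 1) - 1) l h
      · intro t ht htk
        obtain ⟨a, b, c⟩ := hl t ht (by omega)
        exact ⟨a, b, by have := hchain t ht htk; omega⟩
      · intro t ht htk
        exact hh t ht (by omega)
    rw [Finset.sum_Icc_succ_top (by omega : 1 ≤ k + 1)]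
    have htel : r (h (k + 1)) - r (l (k + 1)) ≤
        ∑ j ∈ Ico (l (k + 1)) (h (k + 1)), max (r (j + 1) - r j) 0 := by
      rw [tel r _ _ (le_of_lt h2)]
      exact Finset.sum_le_sum fun j _ => le_max_left _ _
    calc ∑ t ∈ Icc 1 k, (r (h t) - r (l t)) + (r (h (k + 1)) - r (l (k + 1)))
        ≤ (∑ j ∈ Ico 1 (l (k + 1) - 1), max (r (j + 1) - r j) 0) +
          ∑ j ∈ Ico (l (k + 1)) (h (k + 1)), max (r (j + 1) - r j) 0 :=
          add_le_add hsub htel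
      _ ≤ (∑ j ∈ Ico 1 (l (k + 1)), max (r (j + 1) - r j) 0) +
          ∑ j ∈ Ico (l (k + 1)) (h (k + 1)), max (r (j + 1) - r j) 0 := by
          refine add_le_add_left (Finset.sum_le_sum_of_subset_of_nonneg
            (Finset.Ico_subset_Ico le_rfl (by omega)) ?_) _
          intro j _ _; exact le_max_right _ _
      _ = ∑ j ∈ Ico 1 (h (k + 1)), max (r (j + 1) - r j) 0 :=
          Finset.sum_Ico_consecutive _ h1 (le_of_lt h2)
      _ ≤ ∑ j ∈ Ico 1 n, max (r (j + 1) - r j) 0 := by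
          apply Finset.sum_le_sum_of_subset_of_nonneg
            (Finset.Ico_subset_Ico le_rfl h3)
          intro j _ _; exact le_max_right _ _

private lemma exists_sel (r : ℕ → ℝ) : ∀ n, 1 ≤ n →
    (∃ (k : ℕ) (l h : ℕ → ℕ),
      (∀ t, 1 ≤ t → t ≤ k → 1 ≤ l t ∧ l t < h t ∧ h t ≤ n) ∧
      (∀ t, 1 ≤ t → t < k → h t < l (t + 1)) ∧
      ∑ j ∈ Ico 1 n, max (r (j + 1) - r j) 0 ≤ ∑ t ∈ Icc 1 k, (r (h t) - r (l t))) ∧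
    (∃ (k : ℕ) (l h : ℕ → ℕ),
      (∀ t, 1 ≤ t → t ≤ k → 1 ≤ l t ∧ l t < h t ∧ h t ≤ n) ∧
      (∀ t, 1 ≤ t → t ≤ k → h t < l (t + 1)) ∧
      1 ≤ l (k + 1) ∧ l (k + 1) ≤ n ∧
      (∑ j ∈ Ico 1 n, max (r (j + 1) - r j) 0) - r n ≤
        (∑ t ∈ Icc 1 k, (r (h t) - r (l t))) - r (l (k + 1))) := by
  intro n hn
  induction n, hn using Nat.le_induction with
  | base =>
    constructor
    · exact ⟨0, fun _ => 0, fun _ => 0, fun t ht htk => by omega,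
        fun t ht htk => by omega, by simp⟩
    · exact ⟨0, fun _ => 1, fun _ => 0, fun t ht htk => by omega,
        fun t ht htk => by omega, le_rfl, le_rfl, by simp⟩
  | succ n hn ih =>
    obtain ⟨⟨kc, lc, hc, hlc, hhc, hpc⟩, ⟨ko, lo, ho, hlo, hho, hl1, hl2, hpo⟩⟩ := ih
    have hsum : ∑ j ∈ Ico 1 (n + 1), max (r (j + 1) - r j) 0 =
        (∑ j ∈ Ico 1 n, max (r (j + 1) - r j) 0) + max (r (n + 1) - r n) 0 :=
      Finset.sum_Ico_succ_top (by omega) _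
    rcases le_or_gt (r (n + 1) - r n) 0 with hd | hd
    · have hmax : max (r (n + 1) - r n) 0 = 0 := max_eq_right hd
      constructor
      · refine ⟨kc, lc, hc, fun t ht htk => ?_, hhc, ?_⟩
        · obtain ⟨a, b, c⟩ := hlc t ht htk; exact ⟨a, b, by omega⟩
        · rw [hsum, hmax]; linarith
      · -- open: take closed selection, buy at n+1
        refine ⟨kc, Function.update lc (kc + 1) (n + 1), hc,
          fun t ht htk => ?_, fun t ht htk => ?_, ?_, ?_, ?_⟩
        · rw [Function.update_of_ne (by omega)]
          obtain ⟨a, b, c⟩ := hlc t ht htk; exact ⟨a, b, by omega⟩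
        · rcases eq_or_lt_of_le (Nat.succ_le_succ htk) with he | hlt
          · have ht1 : t + 1 = kc + 1 := he
            rw [ht1, Function.update_self]
            have := (hlc t ht htk).2.2; omega
          · rw [Function.update_of_ne (by omega)]
            exact hhc t ht (by omega)
        · rw [Function.update_self]; omega
        · rw [Function.update_self]
        · rw [Function.update_self, hsum, hmax]
          have hcongr : ∑ t ∈ Icc 1 kc,
              (r (hc t) - r (Function.update lc (kc + 1) (n + 1) t))
              = ∑ t ∈ Icc 1 kc, (r (hc t) - r (lc t)) := by
            apply Finset.sum_congr rfl
            intro t htm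
            have : t ≤ kc := (Finset.mem_Icc.mp htm).2
            rw [Function.update_of_ne (by omega)]
          rw [hcongr]
          linarith
    · have hmax : max (r (n + 1) - r n) 0 = r (n + 1) - r n := max_eq_left (le_of_lt hd)
      constructor
      · -- closed: take open selection, sell at n+1
        refine ⟨ko + 1, lo, Function.update ho (ko + 1) (n + 1),
          fun t ht htk => ?_, fun t ht htk => ?_, ?_⟩
        · rcases eq_or_lt_of_le htk with he | hlt
          · subst he
            rw [Function.update_self]
            exact ⟨hl1, by omega, le_rfl⟩
          · rw [Function.update_of_ne (by omega)]
            obtain ⟨a, b, c⟩ := hlo t ht (by omega); exact ⟨a, b, by omega⟩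
        · rw [Function.update_of_ne (by omega)]
          exact hho t ht (by omega)
        · rw [hsum, hmax, Finset.sum_Icc_succ_top (by omega : 1 ≤ ko + 1),
            Function.update_self]
          have hcongr : ∑ t ∈ Icc 1 ko,
              (r (Function.update ho (ko + 1) (n + 1) t) - r (lo t))
              = ∑ t ∈ Icc 1 ko, (r (ho t) - r (lo t)) := by
            apply Finset.sum_congr rfl
            intro t htm
            have : t ≤ ko := (Finset.mem_Icc.mp htm).2
            rw [Function.update_of_ne (by omega)]
          rw [hcongr]
          linarith
      · -- open: keep old open selection
        refine ⟨ko, lo, ho, fun t ht htk => ?_, hho, hl1, by omega, ?_⟩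
        · obtain ⟨a, b, c⟩ := hlo t ht htk; exact ⟨a, b, by omega⟩
        · rw [hsum, hmax]; linarith

/-- The optimal off-line profit: the maximum over all `k ≥ 0` and all valid selections
`1 ≤ ℓ_1 < h_1 < ⋯ < ℓ_k < h_k ≤ n` of the profit `Σ_t (r(h_t) − r(ℓ_t))` equals
`Σ_{j=1}^{n-1} max(r(j+1) − r(j), 0)`. -/
theorem stmt3 (n : ℕ) (r : ℕ → ℝ) :
    IsGreatest
      {p : ℝ | ∃ (k : ℕ) (l h : ℕ → ℕ),
        (∀ t, 1 ≤ t → t ≤ k → 1 ≤ l t ∧ l t < h t ∧ h t ≤ n) ∧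
        (∀ t, 1 ≤ t → t < k → h t < l (t + 1)) ∧
        p = ∑ t ∈ Finset.Icc 1 k, (r (h t) - r (l t))}
      (∑ j ∈ Finset.Icc 1 (n - 1), max (r (j + 1) - r j) 0) := by
  rw [icc_eq_ico]
  constructor
  · rcases Nat.eq_zero_or_pos n with hn | hn
    · subst hn
      refine ⟨0, fun _ => 0, fun _ => 0, fun t ht htk => by omega,
        fun t ht htk => by omega, by simp⟩
    · obtain ⟨⟨k, l, h, hl, hh, hp⟩, _⟩ := exists_sel r n hn
      have hub := upper r k n l h hl hh
      exact ⟨k, l, h, hl, hh, le_antisymm hp hub⟩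
  · rintro p ⟨k, l, h, hl, hh, rfl⟩
    exact upper r k n l h hl hh
end

section
/- For n ≥ 1 and a uniformly random permutation σ of {1,…,n}, E[Σ_{j=1}^{n−1} max(σ(j+1) − σ(j), 0)] = (n² − 1)/6. Consequently the optimal off-line algorithm for multiple low/high pair selection has expected profit (n² − 1)/6. -/
open Finset

lemma sum_perm_zero {k : ℕ} (G : Fin (k+1) → ℝ) :
    ∑ e : Equiv.Perm (Fin (k+1)), G (e 0) = (k.factorial : ℝ) * ∑ b, G b := by
  rw [← Equiv.sum_comp Equiv.Perm.decomposeFin.symm (fun e => G (e 0))]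
  rw [Fintype.sum_prod_type]
  simp [Equiv.Perm.decomposeFin_symm_apply_zero, Finset.sum_const, Fintype.card_perm,
    mul_comm, Finset.mul_sum]

lemma sum_perm_pair01 {k : ℕ} (F : Fin (k+2) → Fin (k+2) → ℝ) (hF : ∀ a, F a a = 0) :
    ∑ σ : Equiv.Perm (Fin (k+2)), F (σ 0) (σ 1) =
      (k.factorial : ℝ) * ∑ a, ∑ b, F a b := by
  rw [← Equiv.sum_comp Equiv.Perm.decomposeFin.symm (fun σ => F (σ 0) (σ 1))]
  rw [Fintype.sum_prod_type]
  have h1 : (1 : Fin (k+2)) = (0 : Fin (k+1)).succ := rfl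
  simp only [Equiv.Perm.decomposeFin_symm_apply_zero, h1,
    Equiv.Perm.decomposeFin_symm_apply_succ]
  have inner : ∀ p : Fin (k+2),
      (∑ e : Equiv.Perm (Fin (k+1)), F p (Equiv.swap 0 p ((e 0).succ)))
        = (k.factorial : ℝ) * ∑ b, F p b := by
    intro p
    rw [sum_perm_zero (fun b => F p (Equiv.swap 0 p b.succ))]
    congr 1
    have hswap : ∑ b : Fin (k+2), F p b = ∑ b : Fin (k+2), F p (Equiv.swap 0 p b) :=
      (Equiv.sum_comp (Equiv.swap 0 p) (fun b => F p b)).symm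
    rw [hswap]
    conv_rhs => rw [Fin.sum_univ_succ]
    simp [hF]
  rw [Finset.sum_congr rfl (fun p _ => inner p), ← Finset.mul_sum]

lemma sum_perm_pair {k : ℕ} (p q : Fin (k+2)) (hpq : p ≠ q)
    (F : Fin (k+2) → Fin (k+2) → ℝ) (hF : ∀ a, F a a = 0) :
    ∑ σ : Equiv.Perm (Fin (k+2)), F (σ p) (σ q) =
      (k.factorial : ℝ) * ∑ a, ∑ b, F a b := by
  set q' : Fin (k+2) := Equiv.swap 0 p q with hq'
  have hq'0 : q' ≠ 0 := by
    simp only [hq', Ne]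
    intro h
    apply hpq
    have := congrArg (Equiv.swap 0 p) h
    simpa [Equiv.swap_apply_left] using this.symm
  set c : Equiv.Perm (Fin (k+2)) := Equiv.swap 0 p * Equiv.swap 1 q' with hc
  have h01 : (0 : Fin (k+2)) ≠ 1 := by simp [Fin.ext_iff]
  have hc0 : c 0 = p := by
    have hs : (Equiv.swap 1 q') 0 = 0 := Equiv.swap_apply_of_ne_of_ne h01 (Ne.symm hq'0)
    simp [hc, Equiv.Perm.mul_apply, hs]
  have hc1 : c 1 = q := by
    simp [hc, Equiv.Perm.mul_apply, Equiv.swap_apply_left, hq']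
  have := Equiv.sum_comp (Equiv.mulRight c) (fun σ : Equiv.Perm (Fin (k+2)) => F (σ 0) (σ 1))
  rw [← sum_perm_pair01 F hF, ← this]
  apply Finset.sum_congr rfl
  intro σ _
  simp [Equiv.Perm.mul_apply, hc0, hc1]

lemma cast_sum_range (m : ℕ) : ∑ a ∈ range m, (a : ℝ) = m * (m - 1) / 2 := by
  induction m with
  | zero => simp
  | succ l ih =>
    rw [Finset.sum_range_succ, ih]
    push_cast
    ring

lemma T_formula (n : ℕ) :
    ∑ a ∈ range n, ∑ b ∈ range n, max ((b:ℝ) - a) 0 = ((n:ℝ)^3 - n) / 6 := by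
  induction n with
  | zero => simp
  | succ m ih =>
    have hsplit : ∀ a ∈ range (m+1), ∑ b ∈ range (m+1), max ((b:ℝ) - a) 0
        = (∑ b ∈ range m, max ((b:ℝ) - a) 0) + max ((m:ℝ) - a) 0 := by
      intro a _
      rw [Finset.sum_range_succ]
    rw [Finset.sum_congr rfl hsplit, Finset.sum_add_distrib, Finset.sum_range_succ,
      Finset.sum_range_succ]
    have h0 : ∀ b ∈ range m, max ((b:ℝ) - m) 0 = 0 := by
      intro b hb
      have := mem_range.1 hb
      apply max_eq_right
      have : (b:ℝ) ≤ m := by exact_mod_cast this.le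
      linarith
    rw [Finset.sum_eq_zero h0, ih]
    have h1 : ∀ a ∈ range m, max ((m:ℝ) - a) 0 = (m:ℝ) - a := by
      intro a ha
      have := mem_range.1 ha
      apply max_eq_left
      have : (a:ℝ) ≤ m := by exact_mod_cast this.le
      linarith
    rw [Finset.sum_congr rfl h1, Finset.sum_sub_distrib, Finset.sum_const, cast_sum_range]
    rcases Nat.eq_zero_or_pos m with hm | hm
    · subst hm; norm_num
    · have : (1:ℝ) ≤ m := by exact_mod_cast hm
      simp only [Finset.card_range, sub_self, max_self]
      push_cast
      field_simp
      ring

/-- The optimal off-line algorithm for multiple low/high pair selection has expected profit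
`E[Σ_{j=1}^{n−1} max(σ(j+1) − σ(j), 0)] = (n² − 1)/6`. -/
theorem stmt5 (n : ℕ) (hn : 1 ≤ n) :
    (∑ σ : Equiv.Perm (Fin n),
        ∑ j ∈ Finset.Icc 1 (n - 1), max ((rnk σ (j + 1) : ℝ) - rnk σ j) 0) /
      (n.factorial : ℝ) = ((n : ℝ) ^ 2 - 1) / 6 := by
  match n, hn with
  | 1, _ => simp
  | (k+2), _ =>
    rw [Finset.sum_comm]
    have key : ∀ j ∈ Finset.Icc 1 (k+2-1),
        (∑ σ : Equiv.Perm (Fin (k+2)), max ((rnk σ (j + 1) : ℝ) - rnk σ j) 0)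
          = (k.factorial : ℝ) * ∑ a : Fin (k+2), ∑ b : Fin (k+2), max ((b:ℝ) - a) 0 := by
      intro j hj
      obtain ⟨hj1, hj2⟩ := Finset.mem_Icc.1 hj
      have hq : j < k + 2 := by omega
      have hp : j - 1 < k + 2 := by omega
      set p : Fin (k+2) := ⟨j - 1, hp⟩
      set q : Fin (k+2) := ⟨j, hq⟩
      have hpq : p ≠ q := by
        simp only [p, q, Ne, Fin.mk.injEq]
        omega
      have hterm : ∀ σ : Equiv.Perm (Fin (k+2)),
          max ((rnk σ (j + 1) : ℝ) - rnk σ j) 0 = max (((σ q : ℕ) : ℝ) - (σ p : ℕ)) 0 := by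
        intro σ
        have e1 : rnk σ (j + 1) = (σ q : ℕ) + 1 := by
          unfold rnk
          rw [dif_pos (by omega : j + 1 - 1 < k + 2)]
          congr 1
        have e2 : rnk σ j = (σ p : ℕ) + 1 := by
          unfold rnk
          rw [dif_pos hp]
        rw [e1, e2]
        congr 1
        push_cast
        ring
      rw [Finset.sum_congr rfl (fun σ _ => hterm σ)]
      exact sum_perm_pair p q hpq (fun a b => max (((b:ℕ):ℝ) - (a:ℕ)) 0) (fun a => by simp)
    rw [Finset.sum_congr rfl key, Finset.sum_const, Nat.card_Icc]
    have hT : (∑ a : Fin (k+2), ∑ b : Fin (k+2), max ((b:ℝ) - a) 0)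
        = (((k+2:ℕ):ℝ)^3 - (k+2:ℕ)) / 6 := by
      rw [← T_formula (k+2)]
      rw [← Fin.sum_univ_eq_sum_range (fun a => ∑ b ∈ range (k+2), max ((b:ℝ) - a) 0) (k+2)]
      apply Finset.sum_congr rfl
      intro a _
      rw [← Fin.sum_univ_eq_sum_range (fun b => max ((b:ℝ) - a) 0) (k+2)]
    rw [hT]
    have hfac : ((k+2).factorial : ℝ) = ((k:ℝ)+2) * (((k:ℝ)+1) * (k.factorial : ℝ)) := by
      rw [Nat.factorial_succ, Nat.factorial_succ]
      push_cast
      ring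
    have hk0 : (k.factorial : ℝ) ≠ 0 := Nat.cast_ne_zero.2 (Nat.factorial_ne_zero k)
    rw [hfac]
    simp only [nsmul_eq_mul]
    push_cast
    field_simp
end

section
/- For even n ≥ 2 and a uniformly random permutation σ of {1,…,n}, E[P_OP] = ((n+1)/8) · ( n + H_{(n−2)/2} − 2·H_{n−1} ). -/
open Finset

namespace Aux

noncomputable def cFun {N : ℕ} (i : ℕ) (σ : Equiv.Perm (Fin N)) : ℝ :=
  if opActive σ i then ((rnk σ (i + 1) : ℝ) - rnk σ i) else 0

def ins {m : ℕ} (p : Equiv.Perm (Fin m)) (x : Fin (m + 1)) : Equiv.Perm (Fin (m + 1)) :=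
  (finSuccEquiv' (Fin.last m)).trans ((Equiv.optionCongr p).trans (finSuccEquiv' x).symm)
@[simp] lemma ins_last {m : ℕ} (p : Equiv.Perm (Fin m)) (x : Fin (m + 1)) :
    ins p x (Fin.last m) = x := by
  simp [ins, finSuccEquiv'_at]
@[simp] lemma ins_castSucc {m : ℕ} (p : Equiv.Perm (Fin m)) (x : Fin (m + 1)) (j : Fin m) :
    ins p x (Fin.castSucc j) = x.succAbove (p j) := by
  simp [ins, finSuccEquiv'_last_apply_castSucc]

-- basic rnk lemmas
lemma rnk_pos {N : ℕ} (σ : Equiv.Perm (Fin N)) {j : ℕ} (h1 : 1 ≤ j) (h2 : j ≤ N) :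
    rnk σ j = (σ ⟨j - 1, by omega⟩ : ℕ) + 1 := by
  rw [rnk, dif_pos]

lemma succAbove_val {m : ℕ} (x : Fin (m + 1)) (a : Fin m) :
    (x.succAbove a : ℕ) = if (x : ℕ) ≤ (a : ℕ) then (a : ℕ) + 1 else (a : ℕ) := by
  rw [Fin.succAbove]
  by_cases h : Fin.castSucc a < x
  · rw [if_pos h]
    have : (a : ℕ) < (x : ℕ) := h
    simp [if_neg (by omega : ¬ (x : ℕ) ≤ (a : ℕ))]
  · rw [if_neg h]
    have : (x : ℕ) ≤ (a : ℕ) := by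
      have := Fin.not_lt.mp h
      exact this
    simp [if_pos this]

lemma succAbove_le_iff {m : ℕ} (x : Fin (m + 1)) (a b : Fin m) :
    ((x.succAbove a : ℕ) ≤ (x.succAbove b : ℕ)) ↔ ((a : ℕ) ≤ (b : ℕ)) := by
  constructor
  · intro h
    exact Fin.succAbove_le_succAbove_iff.mp h
  · intro h
    exact Fin.succAbove_le_succAbove_iff.mpr h

lemma rnk_ins {m : ℕ} (p : Equiv.Perm (Fin m)) (x : Fin (m + 1)) {j : ℕ}
    (h1 : 1 ≤ j) (h2 : j ≤ m) :
    rnk (ins p x) j = (x.succAbove (p ⟨j - 1, by omega⟩) : ℕ) + 1 := by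
  rw [rnk_pos _ h1 (by omega)]
  congr 1
  have hcast : (⟨j - 1, by omega⟩ : Fin (m + 1)) = Fin.castSucc ⟨j - 1, by omega⟩ := rfl
  rw [hcast, ins_castSucc]

lemma rnk_ins_last {m : ℕ} (p : Equiv.Perm (Fin m)) (x : Fin (m + 1)) :
    rnk (ins p x) (m + 1) = (x : ℕ) + 1 := by
  rw [rnk_pos _ (by omega) (le_refl _)]
  congr 1
  have : (⟨m + 1 - 1, by omega⟩ : Fin (m + 1)) = Fin.last m := rfl
  rw [this, ins_last]

lemma relRank_ins {m : ℕ} (p : Equiv.Perm (Fin m)) (x : Fin (m + 1)) {j : ℕ}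
    (h1 : 1 ≤ j) (h2 : j ≤ m) :
    relRank (ins p x) j = relRank p j := by
  unfold relRank
  congr 1
  apply filter_congr
  intro j' hj'
  rw [mem_Icc] at hj'
  rw [rnk_ins p x hj'.1 (le_trans hj'.2 h2), rnk_ins p x h1 h2,
    rnk_pos p hj'.1 (le_trans hj'.2 h2), rnk_pos p h1 h2]
  simp only [add_le_add_iff_right]
  rw [succAbove_le_iff]

lemma opActive_ins {m : ℕ} (p : Equiv.Perm (Fin m)) (x : Fin (m + 1)) :
    ∀ j, j ≤ m → opActive (ins p x) j = opActive p j := by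
  intro j
  induction j with
  | zero => intro _; rfl
  | succ j ih =>
    intro hj
    simp only [opActive]
    rw [relRank_ins p x (by omega) hj, ih (by omega)]

lemma active_of_lt {N : ℕ} (σ : Equiv.Perm (Fin N)) {i : ℕ} (hi : 1 ≤ i)
    (h : 2 * relRank σ i < i + 1) : opActive σ i = true := by
  obtain ⟨j, rfl⟩ : ∃ j, i = j + 1 := ⟨i - 1, by omega⟩
  simp only [opActive, Bool.or_eq_true, decide_eq_true_eq]
  left; omega

lemma le_of_active {N : ℕ} (σ : Equiv.Perm (Fin N)) {i : ℕ} (hi : 1 ≤ i)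
    (h : opActive σ i = true) : 2 * relRank σ i ≤ i + 1 := by
  obtain ⟨j, rfl⟩ : ∃ j, i = j + 1 := ⟨i - 1, by omega⟩
  simp only [opActive, Bool.or_eq_true, Bool.and_eq_true, decide_eq_true_eq] at h
  rcases h with h | ⟨⟨h, _⟩, _⟩ <;> omega

-- relRank at the last position is the value there
lemma relRank_last {N : ℕ} (σ : Equiv.Perm (Fin N)) (hN : 1 ≤ N) :
    relRank σ N = (σ ⟨N - 1, by omega⟩ : ℕ) + 1 := by
  unfold relRank
  have hval : rnk σ N = (σ ⟨N - 1, by omega⟩ : ℕ) + 1 := rnk_pos σ hN (le_refl _)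
  have hle : rnk σ N ≤ N := by
    rw [hval]; have := (σ ⟨N - 1, by omega⟩).isLt; omega
  have hcard : ((Finset.Icc 1 N).filter fun j => rnk σ j ≤ rnk σ N).card
      = (Finset.Icc 1 (rnk σ N)).card := by
    apply Finset.card_nbij' (fun j => rnk σ j)
      (fun v => ((σ.symm ⟨(v - 1) % N, Nat.mod_lt _ (by omega)⟩ : ℕ) + 1))
    · intro j hj
      rw [Finset.mem_coe, mem_filter, mem_Icc] at hj
      simp only [Finset.mem_coe]; rw [mem_Icc]
      refine ⟨?_, hj.2⟩
      rw [rnk_pos σ hj.1.1 hj.1.2]; omega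
    · intro v hv
      rw [Finset.mem_coe, mem_Icc] at hv
      have hvN : v - 1 < N := by omega
      simp only [Finset.mem_coe]; rw [mem_filter, mem_Icc]
      have hmod : (v - 1) % N = v - 1 := Nat.mod_eq_of_lt hvN
      have hrnk : rnk σ ((σ.symm ⟨(v - 1) % N, Nat.mod_lt _ (by omega)⟩ : ℕ) + 1) = v := by
        rw [rnk_pos σ (by omega) (by
          have := (σ.symm ⟨(v - 1) % N, Nat.mod_lt _ (by omega)⟩).isLt; omega)]
        have : (⟨(σ.symm ⟨(v - 1) % N, Nat.mod_lt _ (by omega)⟩ : ℕ) + 1 - 1, by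
            have := (σ.symm ⟨(v - 1) % N, Nat.mod_lt _ (by omega)⟩).isLt; omega⟩ : Fin N)
            = σ.symm ⟨(v - 1) % N, Nat.mod_lt _ (by omega)⟩ := by
          apply Fin.ext; simp
        rw [this, Equiv.apply_symm_apply]
        simp [hmod]; omega
      refine ⟨⟨by omega, ?_⟩, ?_⟩
      · have := (σ.symm ⟨(v - 1) % N, Nat.mod_lt _ (by omega)⟩).isLt; omega
      · rw [hrnk]; exact hv.2
    · intro j hj
      rw [Finset.mem_coe, mem_filter, mem_Icc] at hj
      beta_reduce
      rw [rnk_pos σ hj.1.1 hj.1.2]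
      have hlt : (σ ⟨j - 1, by omega⟩ : ℕ) < N := (σ ⟨j - 1, by omega⟩).isLt
      have hmod : ((σ ⟨j - 1, by omega⟩ : ℕ) + 1 - 1) % N = (σ ⟨j - 1, by omega⟩ : ℕ) := by
        simp [Nat.mod_eq_of_lt hlt]
      have : (⟨((σ ⟨j - 1, by omega⟩ : ℕ) + 1 - 1) % N, Nat.mod_lt _ (by omega)⟩ : Fin N)
          = σ ⟨j - 1, by omega⟩ := by apply Fin.ext; simpa using hmod
      rw [this, Equiv.symm_apply_apply]
      simp; omega
    · intro v hv
      rw [Finset.mem_coe, mem_Icc] at hv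
      have hvN : v - 1 < N := by omega
      have hmod : (v - 1) % N = v - 1 := Nat.mod_eq_of_lt hvN
      beta_reduce
      rw [rnk_pos σ (by omega) (by
        have := (σ.symm ⟨(v - 1) % N, Nat.mod_lt _ (by omega)⟩).isLt; omega)]
      have : (⟨(σ.symm ⟨(v - 1) % N, Nat.mod_lt _ (by omega)⟩ : ℕ) + 1 - 1, by
          have := (σ.symm ⟨(v - 1) % N, Nat.mod_lt _ (by omega)⟩).isLt; omega⟩ : Fin N)
          = σ.symm ⟨(v - 1) % N, Nat.mod_lt _ (by omega)⟩ := by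
        apply Fin.ext; simp
      rw [this, Equiv.apply_symm_apply]
      simp [hmod]; omega
  rw [hcard, Nat.card_Icc, hval]
  omega


lemma ins_bijective (m : ℕ) :
    Function.Bijective (fun pr : Equiv.Perm (Fin m) × Fin (m + 1) => ins pr.1 pr.2) := by
  rw [Fintype.bijective_iff_injective_and_card]
  constructor
  · rintro ⟨p, x⟩ ⟨p', x'⟩ h
    simp only at h
    have hx : x = x' := by
      have := congrArg (fun q : Equiv.Perm (Fin (m+1)) => q (Fin.last m)) h
      simpa using this
    subst hx
    have hp : p = p' := by
      apply Equiv.ext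
      intro j
      have := congrArg (fun q : Equiv.Perm (Fin (m+1)) => q (Fin.castSucc j)) h
      simp only [ins_castSucc] at this
      exact Fin.succAbove_right_injective this
    simp [hp]
  · simp [Fintype.card_perm, Nat.factorial_succ, mul_comm]

lemma sum_ins {m : ℕ} (f : Equiv.Perm (Fin (m + 1)) → ℝ) :
    ∑ q : Equiv.Perm (Fin (m + 1)), f q
      = ∑ p : Equiv.Perm (Fin m), ∑ x : Fin (m + 1), f (ins p x) := by
  have := Fintype.sum_bijective _ (ins_bijective m) _ f (fun _ => rfl)
  rw [← this, Fintype.sum_prod_type]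


-- arithmetic helpers
lemma sum_range_cast (h : ℕ) : ∑ x ∈ Finset.range h, (x : ℝ) = h * ((h : ℝ) - 1) / 2 := by
  induction h with
  | zero => simp
  | succ h ih => rw [Finset.sum_range_succ, ih]; push_cast; ring

lemma sum_ite_le {M : ℕ} (a : ℕ) (ha : a < M) :
    ∑ x ∈ Finset.range M, (if x ≤ a then (1 : ℝ) else 0) = (a : ℝ) + 1 := by
  rw [← Finset.sum_filter]
  have h : Finset.filter (fun x => x ≤ a) (Finset.range M) = Finset.range (a + 1) := by
    ext x; simp [Nat.lt_succ_iff]; omega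
  rw [h, Finset.sum_const, Finset.card_range]
  push_cast; ring

lemma sum_succAbove {m : ℕ} (a : Fin m) :
    ∑ x : Fin (m + 1), ((x.succAbove a : ℕ) : ℝ) = ((m : ℝ) + 2) * ((a : ℕ) : ℝ) + 1 := by
  have hterm : ∀ x : Fin (m + 1),
      ((x.succAbove a : ℕ) : ℝ) = ((a : ℕ) : ℝ) + (if (x : ℕ) ≤ (a : ℕ) then (1 : ℝ) else 0) := by
    intro x; rw [succAbove_val]; split_ifs <;> push_cast <;> ring
  rw [Finset.sum_congr rfl (fun x _ => hterm x), Finset.sum_add_distrib, Finset.sum_const,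
    Finset.card_univ, Fintype.card_fin,
    Fin.sum_univ_eq_sum_range (fun k => if k ≤ (a : ℕ) then (1 : ℝ) else 0) (m + 1),
    sum_ite_le _ (by have := a.isLt; omega)]
  push_cast; ring

lemma sum_fin_val (M : ℕ) : ∑ x : Fin M, ((x : ℕ) : ℝ) = M * ((M : ℝ) - 1) / 2 := by
  rw [Fin.sum_univ_eq_sum_range (fun k => ((k : ℕ) : ℝ)) M, sum_range_cast]

-- the peeling step
lemma peel {m k : ℕ} (hkm : k + 2 ≤ m) :
    ∑ q : Equiv.Perm (Fin (m + 1)), cFun (k + 1) q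
      = ((m : ℝ) + 2) * ∑ p : Equiv.Perm (Fin m), cFun (k + 1) p := by
  rw [sum_ins, Finset.mul_sum]
  apply Finset.sum_congr rfl
  intro p _
  simp only [cFun]
  have hact : ∀ x : Fin (m + 1), opActive (ins p x) (k + 1) = opActive p (k + 1) :=
    fun x => opActive_ins p x (k + 1) (by omega)
  by_cases h : opActive p (k + 1)
  · simp only [hact, h, if_true]
    have e1 : ∀ x : Fin (m + 1),
        rnk (ins p x) (k + 1 + 1) = (x.succAbove (p ⟨k + 1 + 1 - 1, by omega⟩) : ℕ) + 1 :=
      fun x => rnk_ins p x (by omega) (by omega)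
    have e2 : ∀ x : Fin (m + 1),
        rnk (ins p x) (k + 1) = (x.succAbove (p ⟨k + 1 - 1, by omega⟩) : ℕ) + 1 :=
      fun x => rnk_ins p x (by omega) (by omega)
    rw [Finset.sum_congr rfl (fun x _ => by rw [e1 x, e2 x]),
      rnk_pos p (by omega : 1 ≤ k + 1 + 1) (by omega), rnk_pos p (by omega : 1 ≤ k + 1) (by omega)]
    have hsplit : ∀ x : Fin (m + 1),
        (((x.succAbove (p ⟨k + 1 + 1 - 1, by omega⟩) : ℕ) + 1 : ℕ) : ℝ)
          - (((x.succAbove (p ⟨k + 1 - 1, by omega⟩) : ℕ) + 1 : ℕ) : ℝ)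
        = ((x.succAbove (p ⟨k + 1 + 1 - 1, by omega⟩) : ℕ) : ℝ)
          - ((x.succAbove (p ⟨k + 1 - 1, by omega⟩) : ℕ) : ℝ) := by
      intro x; push_cast; ring
    rw [Finset.sum_congr rfl (fun x _ => hsplit x), Finset.sum_sub_distrib,
      sum_succAbove, sum_succAbove]
    push_cast; ring
  · simp [hact, h]

lemma sum_last {k : ℕ} (G : Fin (k + 1) → ℝ) :
    ∑ p : Equiv.Perm (Fin (k + 1)), G (p (Fin.last k))
      = (Nat.factorial k : ℝ) * ∑ x : Fin (k + 1), G x := by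
  rw [sum_ins (f := fun q => G (q (Fin.last k)))]
  simp only [ins_last]
  rw [Finset.sum_const, Finset.card_univ, Fintype.card_perm, Fintype.card_fin, nsmul_eq_mul]

-- base case of the chain: N = k + 2, i = k + 1
lemma base (k : ℕ) :
    ∑ q : Equiv.Perm (Fin (k + 2)), cFun (k + 1) q
      = (Nat.factorial k : ℝ) * (((k : ℝ) + 3) / 2)
        * ((((k + 1) / 2 : ℕ) : ℝ) * (((k : ℝ) + 1) - (((k + 1) / 2 : ℕ) : ℝ))) := by
  rw [sum_ins (m := k + 1)]
  have key : ∀ p : Equiv.Perm (Fin (k + 1)),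
      ∑ x : Fin (k + 2), cFun (k + 1) (ins p x)
        = (if 2 * ((p (Fin.last k) : ℕ) + 1) < k + 2 then
            ((k : ℝ) + 1) * ((k : ℝ) + 2) / 2 - ((k : ℝ) + 3) * ((p (Fin.last k) : ℕ) : ℝ) - 1
          else 0) := by
    intro p
    set b : Fin (k + 1) := p (Fin.last k) with hb
    have hlastmk : (⟨k + 1 - 1, by omega⟩ : Fin (k + 1)) = Fin.last k := rfl
    have hrel : relRank p (k + 1) = (b : ℕ) + 1 := by
      rw [relRank_last p (by omega)]
      rfl
    have hact : ∀ x : Fin (k + 2), opActive (ins p x) (k + 1) = opActive p (k + 1) :=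
      fun x => opActive_ins p x (k + 1) (le_refl _)
    have e1 : ∀ x : Fin (k + 2), rnk (ins p x) (k + 1 + 1) = (x : ℕ) + 1 :=
      fun x => rnk_ins_last p x
    have e2 : ∀ x : Fin (k + 2), rnk (ins p x) (k + 1) = (x.succAbove b : ℕ) + 1 := by
      intro x
      rw [rnk_ins p x (by omega) (le_refl _)]
      rfl
    have hsum : ∑ x : Fin (k + 2),
        ((((x : ℕ) + 1 : ℕ) : ℝ) - (((x.succAbove b : ℕ) + 1 : ℕ) : ℝ))
          = ((k : ℝ) + 1) * ((k : ℝ) + 2) / 2 - ((k : ℝ) + 3) * ((b : ℕ) : ℝ) - 1 := by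
      have hterm : ∀ x : Fin (k + 2),
          ((((x : ℕ) + 1 : ℕ) : ℝ) - (((x.succAbove b : ℕ) + 1 : ℕ) : ℝ))
            = ((x : ℕ) : ℝ) - ((x.succAbove b : ℕ) : ℝ) := by
        intro x; push_cast; ring
      rw [Finset.sum_congr rfl (fun x _ => hterm x), Finset.sum_sub_distrib,
        sum_fin_val, sum_succAbove]
      push_cast; ring
    by_cases h : opActive p (k + 1)
    · have hle := le_of_active p (by omega) h
      rw [hrel] at hle
      simp only [cFun, hact, h, if_true]
      rw [Finset.sum_congr rfl (fun x _ => by rw [e1 x, e2 x]), hsum]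
      rcases lt_or_eq_of_le hle with hlt | heq
      · rw [if_pos hlt]
      · rw [if_neg (by omega)]
        have hcast : 2 * (((b : ℕ) : ℝ) + 1) = (k : ℝ) + 2 := by exact_mod_cast heq
        linear_combination (-(((k : ℝ) + 3)) / 2) * hcast
    · simp only [cFun, hact, h, if_false]
      rw [if_neg]
      · simp
      · intro hlt
        exact absurd (active_of_lt p (i := k + 1) (by omega) (by rw [hrel]; omega)) (by simp [h])
  rw [Finset.sum_congr rfl (fun p _ => key p),
    sum_last (G := fun b : Fin (k + 1) => if 2 * ((b : ℕ) + 1) < k + 2 then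
      ((k : ℝ) + 1) * ((k : ℝ) + 2) / 2 - ((k : ℝ) + 3) * ((b : ℕ) : ℝ) - 1 else 0)]
  rw [Fin.sum_univ_eq_sum_range (fun v => if 2 * (v + 1) < k + 2 then
      ((k : ℝ) + 1) * ((k : ℝ) + 2) / 2 - ((k : ℝ) + 3) * (v : ℝ) - 1 else 0) (k + 1)]
  have hcond : ∀ v : ℕ, (2 * (v + 1) < k + 2) ↔ v < (k + 1) / 2 := by intro v; omega
  have hfilter : ∑ v ∈ Finset.range (k + 1), (if 2 * (v + 1) < k + 2 then
      ((k : ℝ) + 1) * ((k : ℝ) + 2) / 2 - ((k : ℝ) + 3) * (v : ℝ) - 1 else 0)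
      = ∑ v ∈ Finset.range ((k + 1) / 2),
          (((k : ℝ) + 1) * ((k : ℝ) + 2) / 2 - ((k : ℝ) + 3) * (v : ℝ) - 1) := by
    rw [Finset.sum_congr rfl (fun v _ => by rw [if_congr (hcond v) rfl rfl]),
      ← Finset.sum_filter]
    apply Finset.sum_congr
    · ext v; simp; omega
    · intro _ _; rfl
  rw [hfilter]
  have hsplit : ∑ v ∈ Finset.range ((k + 1) / 2),
      (((k : ℝ) + 1) * ((k : ℝ) + 2) / 2 - ((k : ℝ) + 3) * (v : ℝ) - 1)
      = (((k + 1) / 2 : ℕ) : ℝ) * (((k : ℝ) + 1) * ((k : ℝ) + 2) / 2 - 1)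
        - ((k : ℝ) + 3) * ((((k + 1) / 2 : ℕ) : ℝ) * ((((k + 1) / 2 : ℕ) : ℝ) - 1) / 2) := by
    rw [Finset.sum_sub_distrib, Finset.sum_sub_distrib, ← Finset.mul_sum, sum_range_cast,
      Finset.sum_const, Finset.card_range, Finset.sum_const, Finset.card_range]
    push_cast; ring
  rw [hsplit]
  ring

noncomputable def Bv (k : ℕ) : ℝ :=
  (Nat.factorial k : ℝ) * (((k : ℝ) + 3) / 2)
    * ((((k + 1) / 2 : ℕ) : ℝ) * (((k : ℝ) + 1) - (((k + 1) / 2 : ℕ) : ℝ)))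

lemma chain (k : ℕ) : ∀ N, k + 2 ≤ N →
    ∑ q : Equiv.Perm (Fin N), cFun (k + 1) q
      = (∏ j ∈ Finset.Icc (k + 3) N, ((j : ℝ) + 1)) * Bv k := by
  intro N hN
  induction N, hN using Nat.le_induction with
  | base =>
    rw [base, show Finset.Icc (k + 3) (k + 2) = ∅ from Finset.Icc_eq_empty (by omega),
      Finset.prod_empty, one_mul, Bv]
  | succ N hN ih =>
    rw [peel (m := N) (k := k) (by omega), ih,
      Finset.prod_Icc_succ_top (by omega : k + 3 ≤ N + 1)]
    push_cast
    ring

lemma prod_fact (k : ℕ) : ∀ N, k + 2 ≤ N →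
    ((Nat.factorial (k + 3) : ℝ)) * ∏ j ∈ Finset.Icc (k + 3) N, ((j : ℝ) + 1)
      = (Nat.factorial (N + 1) : ℝ) := by
  intro N hN
  induction N, hN using Nat.le_induction with
  | base =>
    rw [show Finset.Icc (k + 3) (k + 2) = ∅ from Finset.Icc_eq_empty (by omega),
      Finset.prod_empty, mul_one]

  | succ N hN ih =>
    rw [Finset.prod_Icc_succ_top (by omega : k + 3 ≤ N + 1), ← mul_assoc, ih,
      Nat.factorial_succ (N + 1)]
    push_cast
    ring

lemma harm_succ (m : ℕ) : harm (m + 1) = harm m + 1 / ((m : ℝ) + 1) := by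
  unfold harm
  rw [Finset.sum_Icc_succ_top (by omega : 1 ≤ m + 1)]
  push_cast
  ring

lemma harm_zero : harm 0 = 0 := by
  unfold harm
  simp

lemma final (k : ℕ) :
    ∑ i ∈ Finset.Icc 1 (2 * k + 1),
      (((i / 2 : ℕ) : ℝ) * ((i : ℝ) - ((i / 2 : ℕ) : ℝ))) / ((i : ℝ) * ((i : ℝ) + 1))
      = (1 / 4) * ((2 * (k : ℝ) + 2) + harm k - 2 * harm (2 * k + 1)) := by
  induction k with
  | zero =>
    rw [show 2 * 0 + 1 = 1 from rfl, Finset.Icc_self, Finset.sum_singleton]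
    rw [harm_zero, show harm 1 = harm (0 + 1) from rfl, harm_succ, harm_zero]
    norm_num
  | succ k ih =>
    rw [show 2 * (k + 1) + 1 = (2 * k + 1 + 1) + 1 by ring,
      Finset.sum_Icc_succ_top (by omega), Finset.sum_Icc_succ_top (by omega), ih]
    have e2 : ((2 * k + 1 + 1) / 2 : ℕ) = k + 1 := by omega
    have e3 : ((2 * k + 1 + 1 + 1) / 2 : ℕ) = k + 1 := by omega
    rw [e2, e3]
    rw [harm_succ (2 * k + 1 + 1), harm_succ (2 * k + 1), harm_succ k]
    have c1 : ((k : ℝ) + 1) ≠ 0 := by positivity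
    have c2 : (2 * (k : ℝ) +  1) ≠ 0 := by positivity
    push_cast
    field_simp
    ring

lemma term_eval {n j : ℕ} (hn : j + 2 ≤ n) :
    (∏ jj ∈ Finset.Icc (j + 3) n, ((jj : ℝ) + 1)) * Bv j / (Nat.factorial n : ℝ)
      = (((n : ℕ) : ℝ) + 1) / 2 *
        (((((j + 1) / 2 : ℕ) : ℝ) * (((j + 1 : ℕ) : ℝ) - (((j + 1) / 2 : ℕ) : ℝ)))
          / (((j + 1 : ℕ) : ℝ) * (((j + 1 : ℕ) : ℝ) + 1))) := by
  have hp := prod_fact j n hn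
  have h0 : (Nat.factorial (j + 3) : ℝ) ≠ 0 :=
    Nat.cast_ne_zero.mpr (Nat.factorial_ne_zero _)
  have h1 : (Nat.factorial n : ℝ) ≠ 0 := Nat.cast_ne_zero.mpr (Nat.factorial_ne_zero _)
  have hprod : (∏ jj ∈ Finset.Icc (j + 3) n, ((jj : ℝ) + 1))
      = (Nat.factorial (n + 1) : ℝ) / (Nat.factorial (j + 3) : ℝ) := by
    rw [eq_div_iff h0, mul_comm]
    exact hp
  have hf3 : (Nat.factorial (j + 3) : ℝ)
      = ((j : ℝ) + 3) * ((j : ℝ) + 2) * ((j : ℝ) + 1) * (Nat.factorial j : ℝ) := by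
    show (Nat.factorial (j + 1 + 1 + 1) : ℝ) = _
    rw [Nat.factorial_succ, Nat.factorial_succ, Nat.factorial_succ]
    push_cast
    ring
  have hfn : (Nat.factorial (n + 1) : ℝ) = ((n : ℝ) + 1) * (Nat.factorial n : ℝ) := by
    rw [Nat.factorial_succ]
    push_cast
    ring
  have hj1 : ((j : ℝ) + 1) ≠ 0 := by positivity
  have hj2 : ((j : ℝ) + 2) ≠ 0 := by positivity
  have hj3 : ((j : ℝ) + 3) ≠ 0 := by positivity
  have hjf : (Nat.factorial j : ℝ) ≠ 0 := Nat.cast_ne_zero.mpr (Nat.factorial_ne_zero _)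
  rw [hprod, Bv, hfn, hf3]
  have hc : ((j + 1 : ℕ) : ℝ) = (j : ℝ) + 1 := by push_cast; ring
  rw [hc]
  field_simp
  ring

end Aux

/-- For even `n ≥ 2`, the expected profit of algorithm OP is
`((n+1)/8) · ( n + H_{(n−2)/2} − 2·H_{n−1} )`. -/
theorem stmt11 (n : ℕ) (hn : 2 ≤ n) (hne : Even n) :
    expPOP n = (((n : ℝ) + 1) / 8) * ((n : ℝ) + harm ((n - 2) / 2) - 2 * harm (n - 1)) := by
  obtain ⟨k, rfl⟩ : ∃ k, n = 2 * k + 2 := by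
    obtain ⟨t, ht⟩ := hne
    exact ⟨t - 1, by omega⟩
  have hsum : (∑ σ : Equiv.Perm (Fin (2 * k + 2)), popProfit σ)
      = ∑ i ∈ Finset.Icc 1 (2 * k + 2 - 1),
          ∑ σ : Equiv.Perm (Fin (2 * k + 2)), Aux.cFun i σ := by
    unfold popProfit Aux.cFun
    exact Finset.sum_comm
  rw [expPOP, hsum]
  have hchain : ∀ i ∈ Finset.Icc 1 (2 * k + 2 - 1),
      ∑ σ : Equiv.Perm (Fin (2 * k + 2)), Aux.cFun i σ
        = (∏ jj ∈ Finset.Icc ((i - 1) + 3) (2 * k + 2), ((jj : ℝ) + 1)) * Aux.Bv (i - 1) := by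
    intro i hi
    rw [Finset.mem_Icc] at hi
    have h1 : i - 1 + 1 = i := by omega
    have h := Aux.chain (i - 1) (2 * k + 2) (by omega)
    rw [h1] at h
    exact h
  rw [Finset.sum_congr rfl hchain, Finset.sum_div]
  have hterm : ∀ i ∈ Finset.Icc 1 (2 * k + 2 - 1),
      (∏ jj ∈ Finset.Icc ((i - 1) + 3) (2 * k + 2), ((jj : ℝ) + 1)) * Aux.Bv (i - 1)
          / (Nat.factorial (2 * k + 2) : ℝ)
        = (((2 * k + 2 : ℕ) : ℝ) + 1) / 2 *
            ((((i / 2 : ℕ) : ℝ) * ((i : ℝ) - ((i / 2 : ℕ) : ℝ))) / ((i : ℝ) * ((i : ℝ) + 1))) := by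
    intro i hi
    rw [Finset.mem_Icc] at hi
    have h1 : i - 1 + 1 = i := by omega
    have h := Aux.term_eval (n := 2 * k + 2) (j := i - 1) (by omega)
    rw [h1] at h
    exact h
  rw [Finset.sum_congr rfl hterm, ← Finset.mul_sum,
    show 2 * k + 2 - 1 = 2 * k + 1 by omega, Aux.final k,
    show (2 * k + 2 - 2) / 2 = k by omega]
  push_cast
  ring
end

section
/- For odd n ≥ 1 and a uniformly random permutation σ of {1,…,n}, E[P_OP] = ((n+1)/8) · ( n + H_{(n−1)/2} − 2·H_n + 1/n ). -/
open Finset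

namespace OP

variable {n : ℕ}


lemma rnk_of_le {σ : Equiv.Perm (Fin n)} {a : ℕ} (h : a - 1 < n) :
    rnk σ a = (σ ⟨a - 1, h⟩ : ℕ) + 1 := by rw [rnk, dif_pos h]

lemma rnk_le_iff {σ : Equiv.Perm (Fin n)} {a b : ℕ} (ha : a - 1 < n) (hb : b - 1 < n) :
    rnk σ a ≤ rnk σ b ↔ σ ⟨a - 1, ha⟩ ≤ σ ⟨b - 1, hb⟩ := by
  rw [rnk_of_le ha, rnk_of_le hb, Fin.le_def]; omega

lemma rnk_inj {σ : Equiv.Perm (Fin n)} {a b : ℕ} (ha1 : 1 ≤ a) (ha : a ≤ n)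
    (hb1 : 1 ≤ b) (hb : b ≤ n) (h : rnk σ a = rnk σ b) : a = b := by
  have ha' : a - 1 < n := by omega
  have hb' : b - 1 < n := by omega
  rw [rnk_of_le ha', rnk_of_le hb'] at h
  have h2 : σ ⟨a-1, ha'⟩ = σ ⟨b-1, hb'⟩ := Fin.ext (by omega)
  have h3 := congrArg Fin.val (σ.injective h2)
  simp only [] at h3
  omega

lemma rnk_pos {σ : Equiv.Perm (Fin n)} {a : ℕ} (ha1 : 1 ≤ a) (ha : a ≤ n) :
    1 ≤ rnk σ a ∧ rnk σ a ≤ n := by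
  have ha' : a - 1 < n := by omega
  rw [rnk_of_le ha']
  exact ⟨by omega, (σ ⟨a-1, ha'⟩).isLt⟩

def rho {m : ℕ} (s t : Fin (m+1)) : Equiv.Perm (Fin (m+1)) :=
  (Fin.cycleRange s).trans (Fin.cycleRange t).symm

lemma rho_apply_self {m : ℕ} (s t : Fin (m+1)) : rho s t s = t := by
  show (Fin.cycleRange t).symm (Fin.cycleRange s s) = t
  rw [Fin.cycleRange_self, Equiv.symm_apply_eq, Fin.cycleRange_self]

lemma rho_symm {m : ℕ} (s t : Fin (m+1)) : (rho s t).symm = rho t s := rfl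

lemma cycleRange_ne_zero {m : ℕ} {s u : Fin (m+1)} (hu : u ≠ s) :
    Fin.cycleRange s u ≠ 0 := fun h =>
  hu ((Fin.cycleRange s).injective (h.trans (Fin.cycleRange_self s).symm))

lemma cycleRange_lt_cycleRange {m : ℕ} {s u v : Fin (m+1)} (hu : u ≠ s) (hv : v ≠ s)
    (h : u < v) : Fin.cycleRange s u < Fin.cycleRange s v := by
  rcases lt_or_gt_of_ne hv with hvs | hvs
  · rw [Fin.lt_def, Fin.coe_cycleRange_of_lt (h.trans hvs), Fin.coe_cycleRange_of_lt hvs]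
    exact Nat.succ_lt_succ h
  · rw [Fin.cycleRange_of_gt hvs]
    rcases lt_or_gt_of_ne hu with hus | hus
    · rw [Fin.lt_def, Fin.coe_cycleRange_of_lt hus]
      have := Fin.lt_def.1 hus; have := Fin.lt_def.1 hvs; omega
    · rw [Fin.cycleRange_of_gt hus]; exact h

lemma cycleRange_symm_lt {m : ℕ} {t : Fin (m+1)} {y z : Fin (m+1)} (hy : y ≠ 0)
    (hz : z ≠ 0) (h : y < z) :
    (Fin.cycleRange t).symm y < (Fin.cycleRange t).symm z := by
  set a := (Fin.cycleRange t).symm y with ha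
  set b := (Fin.cycleRange t).symm z with hb
  have hay : Fin.cycleRange t a = y := Equiv.apply_symm_apply _ _
  have hbz : Fin.cycleRange t b = z := Equiv.apply_symm_apply _ _
  have hat : a ≠ t := fun he => hy (by rw [← hay, he, Fin.cycleRange_self])
  have hbt : b ≠ t := fun he => hz (by rw [← hbz, he, Fin.cycleRange_self])
  rcases lt_trichotomy a b with hc | hc | hc
  · exact hc
  · exact absurd (hay ▸ hbz ▸ hc ▸ rfl : y = z) (ne_of_lt h)
  · exact absurd (hay ▸ hbz ▸ cycleRange_lt_cycleRange hbt hat hc) (not_lt_of_gt h)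

lemma rho_lt_rho {m : ℕ} {s t u v : Fin (m+1)} (hu : u ≠ s) (hv : v ≠ s) (h : u < v) :
    rho s t u < rho s t v :=
  cycleRange_symm_lt (cycleRange_ne_zero hu) (cycleRange_ne_zero hv)
    (cycleRange_lt_cycleRange hu hv h)

lemma rho_le_iff {m : ℕ} {s t u v : Fin (m+1)} (hu : u ≠ s) (hv : v ≠ s) :
    rho s t u ≤ rho s t v ↔ u ≤ v := by
  constructor
  · intro hle
    by_contra hlt
    exact absurd (rho_lt_rho hv hu (lt_of_not_ge hlt)) (not_lt_of_ge hle)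
  · intro hle
    rcases eq_or_lt_of_le hle with rfl | hlt
    · exact le_rfl
    · exact le_of_lt (rho_lt_rho hu hv hlt)

lemma rho_ne_t {m : ℕ} {s t u : Fin (m+1)} (hu : u ≠ s) : rho s t u ≠ t := fun h =>
  hu ((rho s t).injective (h.trans (rho_apply_self s t).symm))

section PhiDef

variable (d : ℕ) (hd : d < n)

def Wset (σ : Equiv.Perm (Fin n)) : Finset (Fin n) :=
  (Finset.Iic (⟨d, hd⟩ : Fin n)).image σ

lemma card_Wset (σ : Equiv.Perm (Fin n)) : (Wset d hd σ).card = d + 1 := by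
  rw [Wset, Finset.card_image_of_injective _ σ.injective, Fin.card_Iic]

lemma mem_Wset {σ : Equiv.Perm (Fin n)} (p : Fin n) :
    σ p ∈ Wset d hd σ ↔ p.val ≤ d := by
  constructor
  · intro h
    obtain ⟨q, hq, hqe⟩ := Finset.mem_image.1 h
    cases σ.injective hqe
    exact Fin.le_def.1 (Finset.mem_Iic.1 hq)
  · intro h
    exact Finset.mem_image_of_mem σ (Finset.mem_Iic.2 (Fin.le_def.2 h))

def eW (σ : Equiv.Perm (Fin n)) : Fin (d+1) ≃o {x // x ∈ Wset d hd σ} :=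
  (Wset d hd σ).orderIsoOfFin (card_Wset d hd σ)

def sIdx (σ : Equiv.Perm (Fin n)) : Fin (d+1) :=
  (eW d hd σ).symm ⟨σ ⟨d, hd⟩, (mem_Wset d hd _).2 le_rfl⟩

def uIdx (σ : Equiv.Perm (Fin n)) (p : Fin n) (hp : p.val ≤ d) : Fin (d+1) :=
  (eW d hd σ).symm ⟨σ p, (mem_Wset d hd p).2 hp⟩

def permW (σ : Equiv.Perm (Fin n)) (t : Fin (d+1)) : Equiv.Perm (Fin n) :=
  Equiv.Perm.ofSubtype
    ((eW d hd σ).toEquiv.symm.trans ((rho (sIdx d hd σ) t).trans (eW d hd σ).toEquiv))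

def Phi (σ : Equiv.Perm (Fin n)) (t : Fin (d+1)) : Equiv.Perm (Fin n) :=
  σ.trans (permW d hd σ t)

lemma Phi_apply_of_le {σ : Equiv.Perm (Fin n)} {t : Fin (d+1)} {p : Fin n}
    (hp : p.val ≤ d) :
    Phi d hd σ t p = (eW d hd σ (rho (sIdx d hd σ) t (uIdx d hd σ p hp)) : Fin n) := by
  show permW d hd σ t (σ p) = _
  rw [permW, Equiv.Perm.ofSubtype_apply_of_mem _ ((mem_Wset d hd p).2 hp)]
  rfl

lemma Phi_apply_of_gt {σ : Equiv.Perm (Fin n)} {t : Fin (d+1)} {p : Fin n}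
    (hp : ¬ p.val ≤ d) : Phi d hd σ t p = σ p := by
  show permW d hd σ t (σ p) = σ p
  rw [permW, Equiv.Perm.ofSubtype_apply_of_not_mem]
  rw [mem_Wset d hd p]
  exact hp

lemma uIdx_eq_sIdx (σ : Equiv.Perm (Fin n)) : uIdx d hd σ ⟨d, hd⟩ le_rfl = sIdx d hd σ := rfl

lemma eW_le_eW {σ : Equiv.Perm (Fin n)} {u v : Fin (d+1)} :
    (eW d hd σ u : Fin n) ≤ (eW d hd σ v : Fin n) ↔ u ≤ v := by
  rw [Subtype.coe_le_coe]; exact (eW d hd σ).le_iff_le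

lemma eW_uIdx {σ : Equiv.Perm (Fin n)} {p : Fin n} (hp : p.val ≤ d) :
    (eW d hd σ (uIdx d hd σ p hp) : Fin n) = σ p := by
  rw [uIdx, OrderIso.apply_symm_apply]

lemma eW_sIdx (σ : Equiv.Perm (Fin n)) :
    (eW d hd σ (sIdx d hd σ) : Fin n) = σ ⟨d, hd⟩ := by
  rw [sIdx, OrderIso.apply_symm_apply]

lemma uIdx_ne_sIdx {σ : Equiv.Perm (Fin n)} {p : Fin n} (hp : p.val < d) :
    uIdx d hd σ p (le_of_lt hp) ≠ sIdx d hd σ := by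
  intro h
  have h2 : (eW d hd σ (uIdx d hd σ p (le_of_lt hp)) : Fin n)
      = (eW d hd σ (sIdx d hd σ) : Fin n) := by rw [h]
  rw [eW_uIdx, eW_sIdx] at h2
  have := congrArg Fin.val (σ.injective h2)
  simp only [] at this
  omega

lemma uIdx_inj {σ : Equiv.Perm (Fin n)} {p q : Fin n} (hp : p.val ≤ d) (hq : q.val ≤ d)
    (h : uIdx d hd σ p hp = uIdx d hd σ q hq) : p = q := by
  have h2 : (eW d hd σ (uIdx d hd σ p hp) : Fin n)
      = (eW d hd σ (uIdx d hd σ q hq) : Fin n) := by rw [h]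
  rw [eW_uIdx, eW_uIdx] at h2
  exact σ.injective h2

lemma orderIsoOfFin_congr {s s' : Finset (Fin n)} (h : s = s') (h1 : s.card = d+1)
    (h2 : s'.card = d+1) (u : Fin (d+1)) :
    (s.orderIsoOfFin h1 u : Fin n) = s'.orderIsoOfFin h2 u := by subst h; rfl

lemma orderIsoOfFin_symm_congr {s s' : Finset (Fin n)} (h : s = s') (h1 : s.card = d+1)
    (h2 : s'.card = d+1) {x : Fin n} (m1 : x ∈ s) (m2 : x ∈ s') :
    (s.orderIsoOfFin h1).symm ⟨x, m1⟩ = (s'.orderIsoOfFin h2).symm ⟨x, m2⟩ := by subst h; rfl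

lemma eW_symm_eq {σ : Equiv.Perm (Fin n)} {x : Fin n} (m1 : x ∈ Wset d hd σ)
    {u : Fin (d+1)} (h : (eW d hd σ u : Fin n) = x) :
    (eW d hd σ).symm ⟨x, m1⟩ = u := by
  rw [OrderIso.symm_apply_eq]
  exact Subtype.ext h.symm

lemma Wset_Phi (σ : Equiv.Perm (Fin n)) (t : Fin (d+1)) :
    Wset d hd (Phi d hd σ t) = Wset d hd σ := by
  apply Finset.eq_of_subset_of_card_le
  · intro x hx
    obtain ⟨q, hq, hqe⟩ := Finset.mem_image.1 hx
    have hq' : q.val ≤ d := Fin.le_def.1 (Finset.mem_Iic.1 hq)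
    rw [← hqe, Phi_apply_of_le d hd hq']
    exact (eW d hd σ _).2
  · rw [card_Wset, card_Wset]

lemma eW_Phi_coe (σ : Equiv.Perm (Fin n)) (t : Fin (d+1)) (u : Fin (d+1)) :
    (eW d hd (Phi d hd σ t) u : Fin n) = eW d hd σ u :=
  orderIsoOfFin_congr d (Wset_Phi d hd σ t) _ _ u

lemma eW_symm_Phi (σ : Equiv.Perm (Fin n)) (t : Fin (d+1)) {x : Fin n}
    (m1 : x ∈ Wset d hd (Phi d hd σ t)) (m2 : x ∈ Wset d hd σ) :
    (eW d hd (Phi d hd σ t)).symm ⟨x, m1⟩ = (eW d hd σ).symm ⟨x, m2⟩ :=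
  orderIsoOfFin_symm_congr d (Wset_Phi d hd σ t) _ _ m1 m2

lemma Phi_top (σ : Equiv.Perm (Fin n)) (t : Fin (d+1)) :
    Phi d hd σ t ⟨d, hd⟩ = (eW d hd σ t : Fin n) := by
  rw [Phi_apply_of_le d hd le_rfl, uIdx_eq_sIdx, rho_apply_self]

lemma sIdx_Phi (σ : Equiv.Perm (Fin n)) (t : Fin (d+1)) :
    sIdx d hd (Phi d hd σ t) = t := by
  have hmem : Phi d hd σ t ⟨d, hd⟩ ∈ Wset d hd σ := by
    rw [← Wset_Phi d hd σ t]; exact (mem_Wset d hd _).2 le_rfl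
  rw [sIdx, eW_symm_Phi d hd σ t _ hmem]
  exact eW_symm_eq d hd hmem (Phi_top d hd σ t).symm

lemma uIdx_Phi (σ : Equiv.Perm (Fin n)) (t : Fin (d+1)) {x : Fin n} (hx : x.val ≤ d) :
    uIdx d hd (Phi d hd σ t) x hx = rho (sIdx d hd σ) t (uIdx d hd σ x hx) := by
  have hmem : Phi d hd σ t x ∈ Wset d hd σ := by
    rw [← Wset_Phi d hd σ t]; exact (mem_Wset d hd x).2 hx
  rw [uIdx, eW_symm_Phi d hd σ t _ hmem]
  exact eW_symm_eq d hd hmem (Phi_apply_of_le d hd hx).symm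

lemma Phi_Phi (σ : Equiv.Perm (Fin n)) (t : Fin (d+1)) :
    Phi d hd (Phi d hd σ t) (sIdx d hd σ) = σ := by
  apply Equiv.ext
  intro x
  by_cases hx : x.val ≤ d
  · rw [Phi_apply_of_le d hd hx, sIdx_Phi, uIdx_Phi, eW_Phi_coe]
    have h2 : rho t (sIdx d hd σ) (rho (sIdx d hd σ) t (uIdx d hd σ x hx))
        = uIdx d hd σ x hx := by
      rw [← rho_symm]; exact Equiv.symm_apply_apply _ _
    rw [h2, eW_uIdx]
  · rw [Phi_apply_of_gt d hd hx, Phi_apply_of_gt d hd hx]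

lemma Phi_le_iff {σ : Equiv.Perm (Fin n)} {t : Fin (d+1)} {p q : Fin n}
    (hp : p.val < d) (hq : q.val < d) :
    Phi d hd σ t p ≤ Phi d hd σ t q ↔ σ p ≤ σ q := by
  rw [Phi_apply_of_le d hd (le_of_lt hp), Phi_apply_of_le d hd (le_of_lt hq), eW_le_eW,
    rho_le_iff (uIdx_ne_sIdx d hd hp) (uIdx_ne_sIdx d hd hq), uIdx, uIdx,
    OrderIso.le_iff_le, Subtype.mk_le_mk]

lemma rnk_Phi_le_iff {σ : Equiv.Perm (Fin n)} {t : Fin (d+1)} {a b : ℕ}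
    (ha1 : 1 ≤ a) (had : a ≤ d) (hb1 : 1 ≤ b) (hbd : b ≤ d) :
    (rnk (Phi d hd σ t) a ≤ rnk (Phi d hd σ t) b ↔ rnk σ a ≤ rnk σ b) := by
  have ha' : a - 1 < n := by omega
  have hb' : b - 1 < n := by omega
  rw [rnk_le_iff ha' hb', rnk_le_iff ha' hb']
  exact Phi_le_iff d hd (by simp; omega) (by simp; omega)

lemma patternRank_Phi_inv {σ : Equiv.Perm (Fin n)} {t : Fin (d+1)} {m j : ℕ}
    (hm : m ≤ d) (hj1 : 1 ≤ j) (hjm : j ≤ m) :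
    patternRank (Phi d hd σ t) m j = patternRank σ m j := by
  unfold patternRank
  congr 1
  apply Finset.filter_congr
  intro x hx
  have hx' := Finset.mem_Icc.1 hx
  exact rnk_Phi_le_iff d hd hx'.1 (le_trans hx'.2 hm) hj1 (le_trans hjm hm)

lemma relRank_Phi_inv {σ : Equiv.Perm (Fin n)} {t : Fin (d+1)} {m : ℕ} (hm : m ≤ d) :
    relRank (Phi d hd σ t) m = relRank σ m := by
  rcases Nat.eq_zero_or_pos m with rfl | h1
  · simp [relRank]
  · exact patternRank_Phi_inv d hd hm h1 le_rfl

lemma opActive_Phi_inv {σ : Equiv.Perm (Fin n)} {t : Fin (d+1)} {m : ℕ} (hm : m ≤ d) :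
    opActive (Phi d hd σ t) m = opActive σ m := by
  induction m with
  | zero => rfl
  | succ k ih =>
    simp only [opActive]
    rw [relRank_Phi_inv d hd hm, ih (by omega)]

def posIdx (σ : Equiv.Perm (Fin n)) (m : ℕ) : Fin (d+1) :=
  if h : m - 1 < n ∧ m - 1 ≤ d then uIdx d hd σ ⟨m-1, h.1⟩ h.2 else 0

lemma posIdx_eq {σ : Equiv.Perm (Fin n)} {m : ℕ} (h1 : m - 1 < n) (h2 : m - 1 ≤ d) :
    posIdx d hd σ m = uIdx d hd σ ⟨m-1, h1⟩ h2 := dif_pos ⟨h1, h2⟩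

lemma uIdx_congr {σ : Equiv.Perm (Fin n)} {p q : Fin n} (h : p = q) (hp : p.val ≤ d)
    (hq : q.val ≤ d) : uIdx d hd σ p hp = uIdx d hd σ q hq := by subst h; rfl

lemma patternRank_Phi_eq (σ : Equiv.Perm (Fin n)) (t : Fin (d+1)) :
    patternRank (Phi d hd σ t) d (d+1) = t.val := by
  have hdn : d + 1 - 1 < n := by omega
  have hDfin : (⟨d + 1 - 1, hdn⟩ : Fin n) = ⟨d, hd⟩ := Fin.mk_eq_mk.2 (by omega)
  have hDd : Phi d hd σ t ⟨d, hd⟩ = (eW d hd σ t : Fin n) := Phi_top d hd σ t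
  rw [patternRank, ← Fin.card_Iio (t : Fin (d+1))]
  apply Finset.card_bij (fun m _ => rho (sIdx d hd σ) t (posIdx d hd σ m))
  · -- maps into Iio t
    intro m hm
    obtain ⟨hmIcc, hcond⟩ := Finset.mem_filter.1 hm
    obtain ⟨hm1, hmd⟩ := Finset.mem_Icc.1 hmIcc
    have h1 : m - 1 < n := by omega
    have h2 : m - 1 ≤ d := by omega
    have h2' : m - 1 < d := by omega
    rw [posIdx_eq d hd h1 h2]
    have hcond' : Phi d hd σ t ⟨m-1, h1⟩ ≤ Phi d hd σ t ⟨d, hd⟩ := by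
      have := (rnk_le_iff (σ := Phi d hd σ t) h1 hdn).1 hcond
      rwa [hDfin] at this
    rw [Phi_apply_of_le d hd h2, hDd] at hcond'
    have hle : rho (sIdx d hd σ) t (uIdx d hd σ ⟨m-1, h1⟩ h2) ≤ t :=
      (eW_le_eW d hd).1 hcond'
    have hne : rho (sIdx d hd σ) t (uIdx d hd σ ⟨m-1, h1⟩ h2) ≠ t :=
      rho_ne_t (uIdx_ne_sIdx d hd h2')
    exact Finset.mem_Iio.2 (lt_of_le_of_ne hle hne)
  · -- injective
    intro m hm m' hm' heq
    obtain ⟨hm1, hmd⟩ := Finset.mem_Icc.1 (Finset.mem_filter.1 hm).1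
    obtain ⟨hm1', hmd'⟩ := Finset.mem_Icc.1 (Finset.mem_filter.1 hm').1
    have h1 : m - 1 < n := by omega
    have h2 : m - 1 ≤ d := by omega
    have h1' : m' - 1 < n := by omega
    have h2' : m' - 1 ≤ d := by omega
    rw [posIdx_eq d hd h1 h2, posIdx_eq d hd h1' h2'] at heq
    have := uIdx_inj d hd h2 h2' ((rho (sIdx d hd σ) t).injective heq)
    have := congrArg Fin.val this
    simp only [] at this
    omega
  · -- surjective
    intro v hv
    have hvt : v < t := Finset.mem_Iio.1 hv
    set u := rho t (sIdx d hd σ) v with hu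
    have huv : rho (sIdx d hd σ) t u = v := by
      rw [hu]
      have h := Equiv.apply_symm_apply (rho (sIdx d hd σ) t) v
      rwa [rho_symm] at h
    have hus : u ≠ sIdx d hd σ := by
      intro h
      rw [h, rho_apply_self] at huv
      exact absurd huv.symm (ne_of_lt hvt)
    have hmemW : (eW d hd σ u : Fin n) ∈ Wset d hd σ := (eW d hd σ u).2
    obtain ⟨p, hpIic, hpe⟩ := Finset.mem_image.1 hmemW
    have hpd : p.val ≤ d := Fin.le_def.1 (Finset.mem_Iic.1 hpIic)
    have hup : uIdx d hd σ p hpd = u := eW_symm_eq d hd _ hpe.symm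
    have hpd' : p.val < d := by
      rcases lt_or_eq_of_le hpd with h | h
      · exact h
      · exfalso
        apply hus
        rw [← hup]
        have hp : p = (⟨d, hd⟩ : Fin n) := Fin.ext h
        subst hp
        rfl
    refine ⟨p.val + 1, ?_, ?_⟩
    · apply Finset.mem_filter.2
      refine ⟨Finset.mem_Icc.2 ⟨by omega, by omega⟩, ?_⟩
      have h1 : p.val + 1 - 1 < n := by omega
      have h2 : p.val + 1 - 1 ≤ d := by omega
      have hpfin : (⟨p.val + 1 - 1, h1⟩ : Fin n) = p := Fin.ext (by simp)
      rw [rnk_le_iff h1 hdn, hpfin, hDfin, Phi_apply_of_le d hd hpd, hDd]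
      have : uIdx d hd σ p hpd = u := hup
      rw [this, huv]
      exact (eW_le_eW d hd).2 (le_of_lt hvt)
    · have h1 : p.val + 1 - 1 < n := by omega
      have h2 : p.val + 1 - 1 ≤ d := by omega
      rw [posIdx_eq d hd h1 h2]
      have hpfin : (⟨p.val + 1 - 1, h1⟩ : Fin n) = p := Fin.ext (by simp)
      rw [uIdx_congr d hd hpfin h2 hpd, hup, huv]

lemma master (G : Equiv.Perm (Fin n) → ℕ → ℝ)
    (hG : ∀ σ t x, G (Phi d hd σ t) x = G σ x) :
    ((d : ℝ) + 1) * ∑ σ : Equiv.Perm (Fin n), G σ (patternRank σ d (d+1))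
      = ∑ σ : Equiv.Perm (Fin n), ∑ s ∈ Finset.range (d+1), G σ s := by
  have hinv : Function.Involutive
      (fun p : Equiv.Perm (Fin n) × Fin (d+1) => (Phi d hd p.1 p.2, sIdx d hd p.1)) := by
    rintro ⟨σ, t⟩
    simp only [Prod.mk.injEq]
    exact ⟨Phi_Phi d hd σ t, sIdx_Phi d hd σ t⟩
  have key : ∑ p : Equiv.Perm (Fin n) × Fin (d+1), G p.1 (patternRank p.1 d (d+1))
      = ∑ p : Equiv.Perm (Fin n) × Fin (d+1), G p.1 p.2.val := by
    rw [← Equiv.sum_comp (hinv.toPerm _) (fun p => G p.1 (patternRank p.1 d (d+1)))]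
    apply Finset.sum_congr rfl
    rintro ⟨σ, t⟩ -
    show G (Phi d hd σ t) (patternRank (Phi d hd σ t) d (d+1)) = G σ t.val
    rw [patternRank_Phi_eq, hG]
  have l1 : ∑ p : Equiv.Perm (Fin n) × Fin (d+1), G p.1 (patternRank p.1 d (d+1))
      = ((d:ℝ)+1) * ∑ σ : Equiv.Perm (Fin n), G σ (patternRank σ d (d+1)) := by
    rw [Fintype.sum_prod_type, Finset.mul_sum]
    apply Finset.sum_congr rfl
    intro σ _
    show ∑ _y : Fin (d+1), G σ (patternRank σ d (d+1)) = _
    rw [Finset.sum_const, Finset.card_univ, Fintype.card_fin, nsmul_eq_mul]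
    push_cast
    ring
  have l2 : ∑ p : Equiv.Perm (Fin n) × Fin (d+1), G p.1 p.2.val
      = ∑ σ : Equiv.Perm (Fin n), ∑ s ∈ Finset.range (d+1), G σ s := by
    rw [Fintype.sum_prod_type]
    apply Finset.sum_congr rfl
    intro σ _
    exact Fin.sum_univ_eq_sum_range (fun s => G σ s) (d+1)
  rw [← l1, key, l2]

end PhiDef

lemma sum_mul_perm (τ : Equiv.Perm (Fin n)) (H : Equiv.Perm (Fin n) → ℝ) :
    ∑ σ : Equiv.Perm (Fin n), H (σ * τ) = ∑ σ : Equiv.Perm (Fin n), H σ :=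
  Equiv.sum_comp (Equiv.mulRight τ) H

lemma rnk_mul_swap_of_ne {σ : Equiv.Perm (Fin n)} {a b : Fin n} {m : ℕ}
    (hm1 : 1 ≤ m) (hmn : m ≤ n) (hma : m - 1 ≠ a.val) (hmb : m - 1 ≠ b.val) :
    rnk (σ * Equiv.swap a b) m = rnk σ m := by
  have h : m - 1 < n := by omega
  rw [rnk_of_le h, rnk_of_le h]
  show (σ (Equiv.swap a b ⟨m-1,h⟩) : ℕ) + 1 = _
  rw [Equiv.swap_apply_of_ne_of_ne (Fin.ne_of_val_ne hma) (Fin.ne_of_val_ne hmb)]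

lemma rnk_mul_swap_left {σ : Equiv.Perm (Fin n)} {a b : Fin n} :
    rnk (σ * Equiv.swap a b) (a.val + 1) = rnk σ (b.val + 1) := by
  have h : a.val + 1 - 1 < n := by have := a.isLt; omega
  have h' : b.val + 1 - 1 < n := by have := b.isLt; omega
  rw [rnk_of_le h, rnk_of_le h']
  show (σ (Equiv.swap a b ⟨a.val+1-1,h⟩) : ℕ) + 1 = _
  have ha : (⟨a.val+1-1,h⟩ : Fin n) = a := Fin.ext (by simp)
  have hb : (⟨b.val+1-1,h'⟩ : Fin n) = b := Fin.ext (by simp)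
  rw [ha, hb, Equiv.swap_apply_left]

lemma rnk_mul_swap_right {σ : Equiv.Perm (Fin n)} {a b : Fin n} :
    rnk (σ * Equiv.swap a b) (b.val + 1) = rnk σ (a.val + 1) := by
  have h : b.val + 1 - 1 < n := by have := b.isLt; omega
  have h' : a.val + 1 - 1 < n := by have := a.isLt; omega
  rw [rnk_of_le h, rnk_of_le h']
  show (σ (Equiv.swap a b ⟨b.val+1-1,h⟩) : ℕ) + 1 = _
  have hb : (⟨b.val+1-1,h⟩ : Fin n) = b := Fin.ext (by simp)
  have ha : (⟨a.val+1-1,h'⟩ : Fin n) = a := Fin.ext (by simp)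
  rw [ha, hb, Equiv.swap_apply_right]

lemma relRank_mul_swap {σ : Equiv.Perm (Fin n)} {a b : Fin n} {i m : ℕ} (hm : m ≤ i)
    (ha : i ≤ a.val) (hb : i ≤ b.val) :
    relRank (σ * Equiv.swap a b) m = relRank σ m := by
  unfold relRank
  congr 1
  apply Finset.filter_congr
  intro x hx
  have hx' := Finset.mem_Icc.1 hx
  have han := a.isLt
  rw [rnk_mul_swap_of_ne hx'.1 (by omega) (by omega) (by omega),
    rnk_mul_swap_of_ne (by omega) (by omega) (by omega) (by omega)]

lemma opActive_mul_swap {σ : Equiv.Perm (Fin n)} {a b : Fin n} {i m : ℕ} (hm : m ≤ i)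
    (ha : i ≤ a.val) (hb : i ≤ b.val) :
    opActive (σ * Equiv.swap a b) m = opActive σ m := by
  induction m with
  | zero => rfl
  | succ k ih =>
    simp only [opActive]
    rw [relRank_mul_swap hm ha hb, ih (by omega)]

lemma patternRank_le {σ : Equiv.Perm (Fin n)} {i j : ℕ} : patternRank σ i j ≤ i := by
  calc patternRank σ i j ≤ (Finset.Icc 1 i).card := Finset.card_filter_le _ _
  _ = i := by rw [Nat.card_Icc]; omega

lemma patternRank_pos {σ : Equiv.Perm (Fin n)} {i j : ℕ} (hj1 : 1 ≤ j) (hji : j ≤ i) :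
    1 ≤ patternRank σ i j :=
  Finset.card_pos.2 ⟨j, Finset.mem_filter.2 ⟨Finset.mem_Icc.2 ⟨hj1, hji⟩, le_rfl⟩⟩

lemma relRank_eq_patternRank {σ : Equiv.Perm (Fin n)} {i : ℕ} :
    relRank σ i = patternRank σ i i := rfl

lemma patternRank_pred {σ : Equiv.Perm (Fin n)} {i : ℕ} (hi : 1 ≤ i) :
    patternRank σ (i-1) i + 1 = relRank σ i := by
  unfold patternRank relRank
  have hIcc : Finset.Icc 1 i = insert i (Finset.Icc 1 (i-1)) := by
    ext x; simp only [Finset.mem_Icc, Finset.mem_insert]; omega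
  rw [hIcc, Finset.filter_insert, if_pos le_rfl, Finset.card_insert_of_notMem]
  intro hmem
  have := (Finset.mem_Icc.1 (Finset.mem_filter.1 hmem).1).2
  omega

lemma prank_mono {σ : Equiv.Perm (Fin n)} {i j k : ℕ} (h : rnk σ j ≤ rnk σ k) :
    patternRank σ i j ≤ patternRank σ i k :=
  Finset.card_le_card (fun m hm => by
    obtain ⟨h1, h2⟩ := Finset.mem_filter.1 hm
    exact Finset.mem_filter.2 ⟨h1, le_trans h2 h⟩)

lemma prank_strict {σ : Equiv.Perm (Fin n)} {i j k : ℕ} (hj1 : 1 ≤ j) (hji : j ≤ i)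
    (h : rnk σ k < rnk σ j) : patternRank σ i k < patternRank σ i j := by
  apply Finset.card_lt_card
  rw [Finset.ssubset_iff_of_subset (fun m hm => by
    obtain ⟨h1, h2⟩ := Finset.mem_filter.1 hm
    exact Finset.mem_filter.2 ⟨h1, le_trans h2 (le_of_lt h)⟩)]
  refine ⟨j, Finset.mem_filter.2 ⟨Finset.mem_Icc.2 ⟨hj1, hji⟩, le_rfl⟩, fun hc => ?_⟩
  have := (Finset.mem_filter.1 hc).2
  omega

lemma rnk_top {σ : Equiv.Perm (Fin n)} {j : ℕ} (hj1 : 1 ≤ j) (hjn : j ≤ n) :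
    patternRank σ n j = rnk σ j := by
  obtain ⟨hr1, hrn⟩ := rnk_pos (σ := σ) hj1 hjn
  unfold patternRank
  have h1 : ((Finset.Icc 1 n).filter fun j' => rnk σ j' ≤ rnk σ j).card
      = ((Finset.Icc 1 n).filter fun v => v ≤ rnk σ j).card := by
    apply Finset.card_bij (fun m _ => rnk σ m)
    · intro m hm
      obtain ⟨hmI, hmc⟩ := Finset.mem_filter.1 hm
      obtain ⟨hm1, hmn⟩ := Finset.mem_Icc.1 hmI
      obtain ⟨h1', h2'⟩ := rnk_pos (σ := σ) hm1 hmn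
      exact Finset.mem_filter.2 ⟨Finset.mem_Icc.2 ⟨h1', h2'⟩, hmc⟩
    · intro m hm m' hm' heq
      obtain ⟨hm1, hmn⟩ := Finset.mem_Icc.1 (Finset.mem_filter.1 hm).1
      obtain ⟨hm1', hmn'⟩ := Finset.mem_Icc.1 (Finset.mem_filter.1 hm').1
      exact rnk_inj hm1 hmn hm1' hmn' heq
    · intro v hv
      obtain ⟨hvI, hvc⟩ := Finset.mem_filter.1 hv
      obtain ⟨hv1, hvn⟩ := Finset.mem_Icc.1 hvI
      have hvn' : v - 1 < n := by omega
      set p := σ.symm ⟨v-1, hvn'⟩ with hp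
      have hlt := p.isLt
      refine ⟨p.val + 1, ?_, ?_⟩
      · have hval : rnk σ (p.val + 1) = v := by
          have h' : p.val + 1 - 1 < n := by omega
          rw [rnk_of_le h']
          have hpf : (⟨p.val + 1 - 1, h'⟩ : Fin n) = p := Fin.ext (by simp)
          rw [hpf, hp, Equiv.apply_symm_apply]
          simp; omega
        exact Finset.mem_filter.2 ⟨Finset.mem_Icc.2 ⟨by omega, by omega⟩, by rw [hval]; exact hvc⟩
      · have h' : p.val + 1 - 1 < n := by omega
        rw [rnk_of_le h']
        have hpf : (⟨p.val + 1 - 1, h'⟩ : Fin n) = p := Fin.ext (by simp)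
        rw [hpf, hp, Equiv.apply_symm_apply]
        simp; omega
  rw [h1]
  have h2 : (Finset.Icc 1 n).filter (fun v => v ≤ rnk σ j) = Finset.Icc 1 (rnk σ j) := by
    ext x; simp only [Finset.mem_filter, Finset.mem_Icc]; omega
  rw [h2, Nat.card_Icc]
  omega

set_option maxHeartbeats 1000000 in
lemma sum_patternRank {σ : Equiv.Perm (Fin n)} {i : ℕ} (hin : i ≤ n) :
    ∑ j ∈ Finset.Icc 1 i, patternRank σ i j = ∑ j ∈ Finset.Icc 1 i, j := by
  have hinj : ∀ a ∈ Finset.Icc 1 i, ∀ b ∈ Finset.Icc 1 i,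
      patternRank σ i a = patternRank σ i b → a = b := by
    intro a ha b hb hab
    obtain ⟨ha1, hai⟩ := Finset.mem_Icc.1 ha
    obtain ⟨hb1, hbi⟩ := Finset.mem_Icc.1 hb
    by_contra hne
    have hrne : rnk σ a ≠ rnk σ b := fun h =>
      hne (rnk_inj ha1 (le_trans hai hin) hb1 (le_trans hbi hin) h)
    rcases lt_or_gt_of_ne hrne with h | h
    · exact absurd hab (ne_of_lt (prank_strict hb1 hbi h))
    · exact absurd hab.symm (ne_of_lt (prank_strict ha1 hai h))
  have himg : Finset.image (fun j => patternRank σ i j) (Finset.Icc 1 i) = Finset.Icc 1 i := by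
    apply Finset.eq_of_subset_of_card_le
    · intro x hx
      obtain ⟨j, hj, rfl⟩ := Finset.mem_image.1 hx
      obtain ⟨hj1, hji⟩ := Finset.mem_Icc.1 hj
      exact Finset.mem_Icc.2 ⟨patternRank_pos hj1 hji, patternRank_le⟩
    · rw [Finset.card_image_of_injOn (fun a ha b hb => hinj a ha b hb)]
  calc ∑ j ∈ Finset.Icc 1 i, patternRank σ i j
      = ∑ v ∈ Finset.image (fun j => patternRank σ i j) (Finset.Icc 1 i), v :=
        (Finset.sum_image (f := fun v : ℕ => v) (g := fun j => patternRank σ i j) hinj).symm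
  _ = ∑ j ∈ Finset.Icc 1 i, j := by rw [himg]

lemma relRank_pos {σ : Equiv.Perm (Fin n)} {i : ℕ} (hi : 1 ≤ i) : 1 ≤ relRank σ i :=
  patternRank_pos hi le_rfl

lemma relRank_le {σ : Equiv.Perm (Fin n)} {i : ℕ} : relRank σ i ≤ i := patternRank_le

lemma relRank_one (σ : Equiv.Perm (Fin n)) : relRank σ 1 = 1 := by
  have h1 := relRank_pos (σ := σ) (i := 1) le_rfl
  have h2 := relRank_le (σ := σ) (i := 1)
  omega

lemma opActive_one (σ : Equiv.Perm (Fin n)) : opActive σ 1 = false := by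
  simp [opActive, relRank_one]

lemma gauss (M : ℕ) : ∑ s ∈ Finset.Icc 1 M, (s:ℝ) = M*(M+1)/2 := by
  induction M with
  | zero => simp
  | succ k ih =>
    rw [Finset.sum_Icc_succ_top (by omega), ih]
    push_cast
    ring

lemma indsum_lt (r M : ℕ) (h : r ≤ M) :
    ∑ s ∈ Finset.range M, (if s < r then (1:ℝ) else 0) = r := by
  rw [Finset.sum_boole]
  have : (Finset.range M).filter (fun s => s < r) = Finset.range r := by
    ext x; simp only [Finset.mem_filter, Finset.mem_range]; omega
  rw [this, Finset.card_range]

lemma indsum_ge (r M : ℕ) (h : r ≤ M) :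
    ∑ s ∈ Finset.range M, (if r ≤ s then (1:ℝ) else 0) = (M:ℝ) - r := by
  rw [Finset.sum_boole]
  have : (Finset.range M).filter (fun s => r ≤ s) = Finset.Ico r M := by
    ext x; simp only [Finset.mem_filter, Finset.mem_range, Finset.mem_Ico]; omega
  rw [this, Nat.card_Ico]
  push_cast [h]
  ring

lemma sum_shift (g : ℕ → ℝ) (i : ℕ) :
    ∑ s ∈ Finset.range i, g (s+1) = ∑ s ∈ Finset.Icc 1 i, g s := by
  induction i with
  | zero => simp
  | succ k ih => rw [Finset.sum_range_succ, ih, Finset.sum_Icc_succ_top (by omega)]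

lemma rel_master (i : ℕ) (hi1 : 1 ≤ i) (hd : i - 1 < n) (F : Equiv.Perm (Fin n) → ℝ)
    (hF : ∀ σ t, F (Phi (i-1) hd σ t) = F σ) (g : ℕ → ℝ) :
    (i:ℝ) * ∑ σ : Equiv.Perm (Fin n), F σ * g (relRank σ i)
      = (∑ σ : Equiv.Perm (Fin n), F σ) * ∑ s ∈ Finset.Icc 1 i, g s := by
  have hm := master (i-1) hd (fun σ x => F σ * g (x+1)) (fun σ t x => by simp only [hF])
  have hii : (i-1) + 1 = i := by omega
  rw [hii] at hm
  have hcast : ((i-1:ℕ):ℝ) + 1 = (i:ℝ) := by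
    rw [Nat.cast_sub hi1]; push_cast; ring
  rw [hcast] at hm
  calc (i:ℝ) * ∑ σ : Equiv.Perm (Fin n), F σ * g (relRank σ i)
      = (i:ℝ) * ∑ σ : Equiv.Perm (Fin n), F σ * g (patternRank σ (i-1) i + 1) := by
        congr 1
        exact Finset.sum_congr rfl (fun σ _ => by rw [patternRank_pred hi1])
  _ = ∑ σ : Equiv.Perm (Fin n), ∑ s ∈ Finset.range i, F σ * g (s+1) := hm
  _ = (∑ σ : Equiv.Perm (Fin n), F σ) * ∑ s ∈ Finset.Icc 1 i, g s := by
        rw [Finset.sum_mul]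
        apply Finset.sum_congr rfl
        intro σ _
        rw [← Finset.mul_sum, sum_shift]

lemma VC1 (i j : ℕ) (hj1 : 1 ≤ j) (hji : j ≤ i) (hd : i < n) (F : Equiv.Perm (Fin n) → ℝ)
    (hF : ∀ σ t, F (Phi i hd σ t) = F σ) :
    ((i:ℝ)+1) * ∑ σ : Equiv.Perm (Fin n),
        F σ * (if rnk σ (i+1) ≤ rnk σ j then (1:ℝ) else 0)
      = ∑ σ : Equiv.Perm (Fin n), F σ * (patternRank σ i j : ℝ) := by
  have hm := master i hd (fun σ x => F σ * (if x < patternRank σ i j then (1:ℝ) else 0))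
    (fun σ t x => by simp only [hF, patternRank_Phi_inv i hd le_rfl hj1 hji])
  have hiff : ∀ σ : Equiv.Perm (Fin n),
      (patternRank σ i (i+1) < patternRank σ i j ↔ rnk σ (i+1) ≤ rnk σ j) := by
    intro σ
    constructor
    · intro h
      by_contra hc
      push_neg at hc
      exact absurd (prank_mono (i := i) (le_of_lt hc)) (not_le.2 h)
    · intro h
      have hne : rnk σ (i+1) ≠ rnk σ j := fun he => by
        have := rnk_inj (by omega) (by omega) hj1 (by omega) he
        omega
      exact prank_strict hj1 hji (lt_of_le_of_ne h hne)
  calc ((i:ℝ)+1) * ∑ σ : Equiv.Perm (Fin n),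
        F σ * (if rnk σ (i+1) ≤ rnk σ j then (1:ℝ) else 0)
      = ((i:ℝ)+1) * ∑ σ : Equiv.Perm (Fin n),
        F σ * (if patternRank σ i (i+1) < patternRank σ i j then (1:ℝ) else 0) := by
        congr 1
        exact Finset.sum_congr rfl (fun σ _ => by rw [if_congr (hiff σ) rfl rfl])
  _ = ∑ σ : Equiv.Perm (Fin n), ∑ s ∈ Finset.range (i+1),
        F σ * (if s < patternRank σ i j then (1:ℝ) else 0) := by
        have hcast : ((i:ℕ):ℝ) + 1 = (i:ℝ) + 1 := by norm_num
        exact hm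
  _ = ∑ σ : Equiv.Perm (Fin n), F σ * (patternRank σ i j : ℝ) := by
        apply Finset.sum_congr rfl
        intro σ _
        rw [← Finset.mul_sum, indsum_lt _ _ (le_trans (patternRank_le) (by omega))]

lemma VC2 (i k : ℕ) (hk1 : 1 ≤ k) (hki : k ≤ i) (hd : i < n) (F : Equiv.Perm (Fin n) → ℝ)
    (hF : ∀ σ t, F (Phi i hd σ t) = F σ) :
    ((i:ℝ)+1) * ∑ σ : Equiv.Perm (Fin n),
        F σ * (if rnk σ k ≤ rnk σ (i+1) then (1:ℝ) else 0)
      = ∑ σ : Equiv.Perm (Fin n), F σ * (((i:ℝ)+1) - (patternRank σ i k : ℝ)) := by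
  have hm := master i hd (fun σ x => F σ * (if patternRank σ i k ≤ x then (1:ℝ) else 0))
    (fun σ t x => by simp only [hF, patternRank_Phi_inv i hd le_rfl hk1 hki])
  have hiff : ∀ σ : Equiv.Perm (Fin n),
      (patternRank σ i k ≤ patternRank σ i (i+1) ↔ rnk σ k ≤ rnk σ (i+1)) := by
    intro σ
    constructor
    · intro h
      by_contra hc
      push_neg at hc
      exact absurd (prank_strict hk1 hki hc) (not_lt.2 h)
    · exact fun h => prank_mono h
  calc ((i:ℝ)+1) * ∑ σ : Equiv.Perm (Fin n),
        F σ * (if rnk σ k ≤ rnk σ (i+1) then (1:ℝ) else 0)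
      = ((i:ℝ)+1) * ∑ σ : Equiv.Perm (Fin n),
        F σ * (if patternRank σ i k ≤ patternRank σ i (i+1) then (1:ℝ) else 0) := by
        congr 1
        exact Finset.sum_congr rfl (fun σ _ => by rw [if_congr (hiff σ) rfl rfl])
  _ = ∑ σ : Equiv.Perm (Fin n), ∑ s ∈ Finset.range (i+1),
        F σ * (if patternRank σ i k ≤ s then (1:ℝ) else 0) := hm
  _ = ∑ σ : Equiv.Perm (Fin n), F σ * (((i:ℝ)+1) - (patternRank σ i k : ℝ)) := by
        apply Finset.sum_congr rfl
        intro σ _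
        rw [← Finset.mul_sum, indsum_ge _ _ (le_trans (patternRank_le) (by omega))]
        push_cast
        ring_nf

lemma Icc_split (i : ℕ) (hin : i ≤ n) (f : ℕ → ℝ) :
    ∑ k ∈ Finset.Icc 1 n, f k = ∑ k ∈ Finset.Icc 1 i, f k + ∑ k ∈ Finset.Icc (i+1) n, f k := by
  rw [← Finset.sum_union (by
    rw [Finset.disjoint_left]
    intro x hx hx'
    have := Finset.mem_Icc.1 hx
    have := Finset.mem_Icc.1 hx'
    omega)]
  congr 1
  ext x
  simp only [Finset.mem_union, Finset.mem_Icc]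
  omega

lemma ind_relRank (σ : Equiv.Perm (Fin n)) (i : ℕ) :
    ∑ k ∈ Finset.Icc 1 i, (if rnk σ k ≤ rnk σ i then (1:ℝ) else 0) = (relRank σ i : ℝ) := by
  rw [Finset.sum_boole]
  norm_num
  rfl

lemma ind_rnk (σ : Equiv.Perm (Fin n)) {j : ℕ} (hj1 : 1 ≤ j) (hjn : j ≤ n) :
    ∑ k ∈ Finset.Icc 1 n, (if rnk σ k ≤ rnk σ j then (1:ℝ) else 0) = (rnk σ j : ℝ) := by
  rw [Finset.sum_boole]
  have h : ((Finset.Icc 1 n).filter fun k => rnk σ k ≤ rnk σ j).card = rnk σ j :=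
    rnk_top hj1 hjn
  rw [h]

lemma V1 (i : ℕ) (hi1 : 1 ≤ i) (hin : i + 1 ≤ n) (hd : i < n) (F : Equiv.Perm (Fin n) → ℝ)
    (hP : ∀ σ t, F (Phi i hd σ t) = F σ)
    (hS : ∀ (a b : Fin n), i ≤ a.val → i ≤ b.val → ∀ σ, F (σ * Equiv.swap a b) = F σ) :
    ((i:ℝ)+1) * ∑ σ : Equiv.Perm (Fin n), F σ * (rnk σ i : ℝ)
      = ((n:ℝ)+1) * ∑ σ : Equiv.Perm (Fin n), F σ * (relRank σ i : ℝ) := by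
  have expand : ∑ σ : Equiv.Perm (Fin n), F σ * (rnk σ i:ℝ)
      = ∑ k ∈ Finset.Icc 1 n, ∑ σ : Equiv.Perm (Fin n),
          F σ * (if rnk σ k ≤ rnk σ i then (1:ℝ) else 0) := by
    rw [Finset.sum_comm]
    apply Finset.sum_congr rfl
    intro σ _
    rw [← Finset.mul_sum, ind_rnk σ hi1 (by omega)]
  have chunk1 : ∑ k ∈ Finset.Icc 1 i, ∑ σ : Equiv.Perm (Fin n),
      F σ * (if rnk σ k ≤ rnk σ i then (1:ℝ) else 0)
      = ∑ σ : Equiv.Perm (Fin n), F σ * (relRank σ i : ℝ) := by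
    rw [Finset.sum_comm]
    apply Finset.sum_congr rfl
    intro σ _
    rw [← Finset.mul_sum, ind_relRank]
  have key2 : ∀ k ∈ Finset.Icc (i+1) n, ((i:ℝ)+1) * ∑ σ : Equiv.Perm (Fin n),
      F σ * (if rnk σ k ≤ rnk σ i then (1:ℝ) else 0)
      = ∑ σ : Equiv.Perm (Fin n), F σ * (relRank σ i : ℝ) := by
    intro k hk
    obtain ⟨hk1, hkn⟩ := Finset.mem_Icc.1 hk
    have base : ((i:ℝ)+1) * ∑ σ : Equiv.Perm (Fin n),
        F σ * (if rnk σ (i+1) ≤ rnk σ i then (1:ℝ) else 0)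
        = ∑ σ : Equiv.Perm (Fin n), F σ * (relRank σ i : ℝ) := by
      have h := VC1 i i hi1 le_rfl hd F hP
      rw [h]
      apply Finset.sum_congr rfl
      intro σ _
      rw [relRank_eq_patternRank]
    rcases eq_or_lt_of_le hk1 with rfl | hklt
    · exact base
    · set a : Fin n := ⟨k-1, by omega⟩ with ha
      set b : Fin n := ⟨i, by omega⟩ with hb
      have hswap : ∑ σ : Equiv.Perm (Fin n), F σ * (if rnk σ k ≤ rnk σ i then (1:ℝ) else 0)
          = ∑ σ : Equiv.Perm (Fin n), F σ * (if rnk σ (i+1) ≤ rnk σ i then (1:ℝ) else 0) := by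
        rw [← sum_mul_perm (Equiv.swap a b)
          (fun σ => F σ * (if rnk σ k ≤ rnk σ i then (1:ℝ) else 0))]
        apply Finset.sum_congr rfl
        intro σ _
        rw [hS a b (by simp [ha]; omega) (by simp [hb]) σ]
        congr 1
        have e1 : rnk (σ * Equiv.swap a b) k = rnk σ (i+1) := by
          have := rnk_mul_swap_left (σ := σ) (a := a) (b := b)
          simp only [ha, hb] at this ⊢
          rw [show k - 1 + 1 = k by omega] at this
          rw [this]
        have e2 : rnk (σ * Equiv.swap a b) i = rnk σ i := by
          apply rnk_mul_swap_of_ne hi1 (by omega)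
          · simp [ha]; omega
          · simp [hb]; omega
        rw [e1, e2]
      rw [hswap]
      exact base
  calc ((i:ℝ)+1) * ∑ σ : Equiv.Perm (Fin n), F σ * (rnk σ i : ℝ)
      = ((i:ℝ)+1) * (∑ k ∈ Finset.Icc 1 i, ∑ σ : Equiv.Perm (Fin n),
          F σ * (if rnk σ k ≤ rnk σ i then (1:ℝ) else 0)
        + ∑ k ∈ Finset.Icc (i+1) n, ∑ σ : Equiv.Perm (Fin n),
          F σ * (if rnk σ k ≤ rnk σ i then (1:ℝ) else 0)) := by
        rw [expand, Icc_split i (by omega)]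
  _ = ((i:ℝ)+1) * ∑ σ : Equiv.Perm (Fin n), F σ * (relRank σ i : ℝ)
      + ∑ k ∈ Finset.Icc (i+1) n, (((i:ℝ)+1) * ∑ σ : Equiv.Perm (Fin n),
          F σ * (if rnk σ k ≤ rnk σ i then (1:ℝ) else 0)) := by
        rw [chunk1, mul_add]
        congr 1
        exact Finset.mul_sum _ _ _
  _ = ((i:ℝ)+1) * ∑ σ : Equiv.Perm (Fin n), F σ * (relRank σ i : ℝ)
      + ∑ _k ∈ Finset.Icc (i+1) n, ∑ σ : Equiv.Perm (Fin n), F σ * (relRank σ i : ℝ) := by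
        rw [Finset.sum_congr rfl key2]
  _ = ((n:ℝ)+1) * ∑ σ : Equiv.Perm (Fin n), F σ * (relRank σ i : ℝ) := by
        rw [Finset.sum_const, Nat.card_Icc, nsmul_eq_mul]
        have : ((n + 1 - (i+1) : ℕ) : ℝ) = (n:ℝ) - i := by
          rw [Nat.cast_sub (by omega)]
          push_cast
          ring
        rw [this]
        ring

lemma V2 (i : ℕ) (hi1 : 1 ≤ i) (hin : i + 1 ≤ n) (hd : i < n) (F : Equiv.Perm (Fin n) → ℝ)
    (hP : ∀ σ t, F (Phi i hd σ t) = F σ)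
    (hS : ∀ (a b : Fin n), i ≤ a.val → i ≤ b.val → ∀ σ, F (σ * Equiv.swap a b) = F σ) :
    2 * ∑ σ : Equiv.Perm (Fin n), F σ * (rnk σ (i+1) : ℝ)
      = ((n:ℝ)+1) * ∑ σ : Equiv.Perm (Fin n), F σ := by
  have hi1R : ((i:ℝ)+1) ≠ 0 := by positivity
  apply mul_left_cancel₀ hi1R
  have expand : ∑ σ : Equiv.Perm (Fin n), F σ * (rnk σ (i+1):ℝ)
      = ∑ k ∈ Finset.Icc 1 n, ∑ σ : Equiv.Perm (Fin n),
          F σ * (if rnk σ k ≤ rnk σ (i+1) then (1:ℝ) else 0) := by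
    rw [Finset.sum_comm]
    apply Finset.sum_congr rfl
    intro σ _
    rw [← Finset.mul_sum, ind_rnk σ (by omega) (by omega)]
  -- chunk A : k ∈ Icc 1 i
  have chunkA : ∑ k ∈ Finset.Icc 1 i, (((i:ℝ)+1) * ∑ σ : Equiv.Perm (Fin n),
        F σ * (if rnk σ k ≤ rnk σ (i+1) then (1:ℝ) else 0))
      = ((i:ℝ) * ((i:ℝ)+1) / 2) * ∑ σ : Equiv.Perm (Fin n), F σ := by
    have hA : ∀ k ∈ Finset.Icc 1 i, (((i:ℝ)+1) * ∑ σ : Equiv.Perm (Fin n),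
        F σ * (if rnk σ k ≤ rnk σ (i+1) then (1:ℝ) else 0))
        = ∑ σ : Equiv.Perm (Fin n), F σ * (((i:ℝ)+1) - (patternRank σ i k : ℝ)) := by
      intro k hk
      obtain ⟨hk1, hki⟩ := Finset.mem_Icc.1 hk
      exact VC2 i k hk1 hki hd F hP
    rw [Finset.sum_congr rfl hA, Finset.sum_comm, Finset.mul_sum]
    apply Finset.sum_congr rfl
    intro σ _
    rw [← Finset.mul_sum]
    have hpt : ∑ k ∈ Finset.Icc 1 i, (((i:ℝ)+1) - (patternRank σ i k : ℝ))
        = (i:ℝ) * ((i:ℝ)+1) / 2 := by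
      rw [Finset.sum_sub_distrib, Finset.sum_const, Nat.card_Icc, nsmul_eq_mul]
      have h1 : ∑ k ∈ Finset.Icc 1 i, (patternRank σ i k : ℝ)
          = (i:ℝ) * ((i:ℝ)+1) / 2 := by
        have := sum_patternRank (σ := σ) (i := i) (by omega)
        have hcast : ∑ k ∈ Finset.Icc 1 i, (patternRank σ i k : ℝ)
            = ((∑ k ∈ Finset.Icc 1 i, patternRank σ i k : ℕ) : ℝ) := by push_cast; rfl
        rw [hcast, this]
        have hg : ((∑ k ∈ Finset.Icc 1 i, k : ℕ) : ℝ) = ∑ k ∈ Finset.Icc 1 i, (k:ℝ) := by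
          push_cast; rfl
        rw [hg, gauss]
      rw [h1]
      have : ((i + 1 - 1 : ℕ) : ℝ) = (i:ℝ) := by push_cast; ring
      rw [this]
      ring
    rw [hpt]
    ring
  -- chunk B : k = i + 1
  have chunkB : ∑ σ : Equiv.Perm (Fin n),
      F σ * (if rnk σ (i+1) ≤ rnk σ (i+1) then (1:ℝ) else 0)
      = ∑ σ : Equiv.Perm (Fin n), F σ := by
    apply Finset.sum_congr rfl
    intro σ _
    rw [if_pos le_rfl, mul_one]
  -- chunk C : k ∈ Icc (i+2) n
  have chunkC : ∀ k ∈ Finset.Icc (i+2) n, 2 * ∑ σ : Equiv.Perm (Fin n),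
      F σ * (if rnk σ k ≤ rnk σ (i+1) then (1:ℝ) else 0)
      = ∑ σ : Equiv.Perm (Fin n), F σ := by
    intro k hk
    obtain ⟨hk1, hkn⟩ := Finset.mem_Icc.1 hk
    set a : Fin n := ⟨k-1, by omega⟩ with ha
    set b : Fin n := ⟨i, by omega⟩ with hb
    have hswap : ∑ σ : Equiv.Perm (Fin n),
        F σ * (if rnk σ k ≤ rnk σ (i+1) then (1:ℝ) else 0)
        = ∑ σ : Equiv.Perm (Fin n),
        F σ * (if rnk σ (i+1) ≤ rnk σ k then (1:ℝ) else 0) := by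
      rw [← sum_mul_perm (Equiv.swap a b)
        (fun σ => F σ * (if rnk σ k ≤ rnk σ (i+1) then (1:ℝ) else 0))]
      apply Finset.sum_congr rfl
      intro σ _
      rw [hS a b (by simp [ha]; omega) (by simp [hb]) σ]
      congr 1
      have e1 : rnk (σ * Equiv.swap a b) k = rnk σ (i+1) := by
        have := rnk_mul_swap_left (σ := σ) (a := a) (b := b)
        simp only [ha, hb] at this ⊢
        rw [show k - 1 + 1 = k by omega] at this
        rw [this]
      have e2 : rnk (σ * Equiv.swap a b) (i+1) = rnk σ k := by
        have := rnk_mul_swap_right (σ := σ) (a := a) (b := b)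
        simp only [ha, hb] at this ⊢
        rw [show k - 1 + 1 = k by omega] at this
        rw [this]
      rw [e1, e2]
    have hne : ∀ σ : Equiv.Perm (Fin n), rnk σ k ≠ rnk σ (i+1) := by
      intro σ he
      have := rnk_inj (by omega) (by omega) (by omega) (by omega) he
      omega
    calc 2 * ∑ σ : Equiv.Perm (Fin n),
        F σ * (if rnk σ k ≤ rnk σ (i+1) then (1:ℝ) else 0)
        = ∑ σ : Equiv.Perm (Fin n),
          (F σ * (if rnk σ k ≤ rnk σ (i+1) then (1:ℝ) else 0)
           + F σ * (if rnk σ (i+1) ≤ rnk σ k then (1:ℝ) else 0)) := by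
          rw [Finset.sum_add_distrib, ← hswap]
          ring
    _ = ∑ σ : Equiv.Perm (Fin n), F σ := by
          apply Finset.sum_congr rfl
          intro σ _
          rw [← mul_add]
          have h := hne σ
          rcases le_or_gt (rnk σ k) (rnk σ (i+1)) with hle | hlt
          · rw [if_pos hle, if_neg (by omega)]
            ring
          · rw [if_neg (by omega), if_pos (le_of_lt hlt)]
            ring
  -- assemble
  have split3 : ∑ k ∈ Finset.Icc 1 n, (∑ σ : Equiv.Perm (Fin n),
        F σ * (if rnk σ k ≤ rnk σ (i+1) then (1:ℝ) else 0))
      = (∑ k ∈ Finset.Icc 1 i, ∑ σ : Equiv.Perm (Fin n),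
          F σ * (if rnk σ k ≤ rnk σ (i+1) then (1:ℝ) else 0))
        + (∑ σ : Equiv.Perm (Fin n),
            F σ * (if rnk σ (i+1) ≤ rnk σ (i+1) then (1:ℝ) else 0))
        + (∑ k ∈ Finset.Icc (i+2) n, ∑ σ : Equiv.Perm (Fin n),
          F σ * (if rnk σ k ≤ rnk σ (i+1) then (1:ℝ) else 0)) := by
    rw [Icc_split i (by omega)]
    have hins : Finset.Icc (i+1) n = insert (i+1) (Finset.Icc (i+2) n) := by
      ext x
      simp only [Finset.mem_Icc, Finset.mem_insert]
      omega
    rw [hins, Finset.sum_insert (by simp only [Finset.mem_Icc]; omega)]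
    ring
  have hA2 : ((i:ℝ)+1) * (∑ k ∈ Finset.Icc 1 i, ∑ σ : Equiv.Perm (Fin n),
        F σ * (if rnk σ k ≤ rnk σ (i+1) then (1:ℝ) else 0))
      = ((i:ℝ) * ((i:ℝ)+1) / 2) * ∑ σ : Equiv.Perm (Fin n), F σ := by
    rw [Finset.mul_sum]
    exact chunkA
  have hC2 : 2 * (∑ k ∈ Finset.Icc (i+2) n, ∑ σ : Equiv.Perm (Fin n),
        F σ * (if rnk σ k ≤ rnk σ (i+1) then (1:ℝ) else 0))
      = ((n:ℝ) - (i:ℝ) - 1) * ∑ σ : Equiv.Perm (Fin n), F σ := by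
    rw [Finset.mul_sum, Finset.sum_congr rfl chunkC, Finset.sum_const, Nat.card_Icc,
      nsmul_eq_mul]
    have : ((n + 1 - (i+2) : ℕ) : ℝ) = (n:ℝ) - (i:ℝ) - 1 := by
      rw [Nat.cast_sub (by omega)]
      push_cast
      ring
    rw [this]
  calc ((i:ℝ)+1) * (2 * ∑ σ : Equiv.Perm (Fin n), F σ * (rnk σ (i+1) : ℝ))
      = 2 * (((i:ℝ)+1) * (∑ k ∈ Finset.Icc 1 i, ∑ σ : Equiv.Perm (Fin n),
          F σ * (if rnk σ k ≤ rnk σ (i+1) then (1:ℝ) else 0)))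
        + 2 * ((i:ℝ)+1) * (∑ σ : Equiv.Perm (Fin n),
            F σ * (if rnk σ (i+1) ≤ rnk σ (i+1) then (1:ℝ) else 0))
        + ((i:ℝ)+1) * (2 * (∑ k ∈ Finset.Icc (i+2) n, ∑ σ : Equiv.Perm (Fin n),
          F σ * (if rnk σ k ≤ rnk σ (i+1) then (1:ℝ) else 0))) := by
        rw [expand, split3]
        ring
  _ = 2 * (((i:ℝ) * ((i:ℝ)+1) / 2) * ∑ σ : Equiv.Perm (Fin n), F σ)
        + 2 * ((i:ℝ)+1) * (∑ σ : Equiv.Perm (Fin n), F σ)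
        + ((i:ℝ)+1) * (((n:ℝ) - (i:ℝ) - 1) * ∑ σ : Equiv.Perm (Fin n), F σ) := by
        rw [hA2, chunkB, hC2]
  _ = ((i:ℝ)+1) * (((n:ℝ)+1) * ∑ σ : Equiv.Perm (Fin n), F σ) := by
        ring

noncomputable def Fi (i : ℕ) (σ : Equiv.Perm (Fin n)) : ℝ := if opActive σ i then 1 else 0

lemma Fi_succ (σ : Equiv.Perm (Fin n)) (m : ℕ) :
    Fi (m+1) σ = (if 2 * relRank σ (m+1) < m+2 then (1:ℝ) else 0)
      + Fi m σ * ((if 2 * relRank σ (m+1) = m+2 then (1:ℝ) else 0)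
        * (if 2 ≤ m+1 then (1:ℝ) else 0)) := by
  unfold Fi
  by_cases hA : 2 * relRank σ (m+1) < m+2
  · have hB : ¬(2 * relRank σ (m+1) = m+2) := by omega
    cases hAct : opActive σ m <;> simp [opActive, hA, hB, hAct]
  · by_cases hB : 2 * relRank σ (m+1) = m+2
    · by_cases hC : 2 ≤ m+1
      · cases hAct : opActive σ m <;> simp [opActive, hA, hB, hC, hAct]
      · cases hAct : opActive σ m <;> simp [opActive, hA, hB, hC, hAct]
    · cases hAct : opActive σ m <;> simp [opActive, hA, hB, hAct]

lemma Fi_Phi {i d : ℕ} (hd : d < n) (hm : i ≤ d) (σ : Equiv.Perm (Fin n)) (t : Fin (d+1)) :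
    Fi i (Phi d hd σ t) = Fi i σ := by
  unfold Fi
  rw [opActive_Phi_inv d hd hm]

lemma Fi_swap {i : ℕ} {a b : Fin n} (ha : i ≤ a.val) (hb : i ≤ b.val)
    (σ : Equiv.Perm (Fin n)) : Fi i (σ * Equiv.swap a b) = Fi i σ := by
  unfold Fi
  rw [opActive_mul_swap le_rfl ha hb]

lemma sum_const_perm : ∑ _σ : Equiv.Perm (Fin n), (1:ℝ) = (n.factorial : ℝ) := by
  rw [Finset.sum_const, Finset.card_univ, nsmul_eq_mul, mul_one]
  rw [Fintype.card_perm, Fintype.card_fin]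

lemma sum_Fi_one : ∑ σ : Equiv.Perm (Fin n), Fi 1 σ = 0 := by
  apply Finset.sum_eq_zero
  intro σ _
  simp [Fi, opActive_one]

lemma sum_FiRel_one : ∑ σ : Equiv.Perm (Fin n), Fi 1 σ * (relRank σ 1 : ℝ) = 0 := by
  apply Finset.sum_eq_zero
  intro σ _
  simp [Fi, opActive_one]

lemma N_rec (i : ℕ) (hi2 : 2 ≤ i) (hin : i ≤ n) :
    (i:ℝ) * ∑ σ : Equiv.Perm (Fin n), Fi i σ
      = (n.factorial:ℝ) * (∑ s ∈ Finset.Icc 1 i, if 2*s < i+1 then (1:ℝ) else 0)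
        + (∑ σ : Equiv.Perm (Fin n), Fi (i-1) σ)
          * (∑ s ∈ Finset.Icc 1 i, if 2*s = i+1 then (1:ℝ) else 0) := by
  have hd : i - 1 < n := by omega
  have hdecomp : ∀ σ : Equiv.Perm (Fin n), Fi i σ
      = (1:ℝ) * (if 2 * relRank σ i < i+1 then (1:ℝ) else 0)
        + Fi (i-1) σ * (if 2 * relRank σ i = i+1 then (1:ℝ) else 0) := by
    intro σ
    have h := Fi_succ σ (i-1)
    rw [show i-1+1 = i by omega, show i-1+2 = i+1 by omega] at h
    rw [h, if_pos (show 2 ≤ i by omega)]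
    ring
  have hsplit : ∑ σ : Equiv.Perm (Fin n), Fi i σ
      = ∑ σ : Equiv.Perm (Fin n), (1:ℝ) * (if 2 * relRank σ i < i+1 then (1:ℝ) else 0)
        + ∑ σ : Equiv.Perm (Fin n), Fi (i-1) σ * (if 2 * relRank σ i = i+1 then (1:ℝ) else 0) := by
    rw [← Finset.sum_add_distrib]
    exact Finset.sum_congr rfl (fun σ _ => hdecomp σ)
  rw [hsplit, mul_add]
  rw [rel_master i (by omega) hd (fun _ => (1:ℝ)) (fun σ t => rfl)
    (fun s => if 2*s < i+1 then (1:ℝ) else 0)]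
  rw [rel_master i (by omega) hd (fun σ => Fi (i-1) σ) (fun σ t => Fi_Phi hd le_rfl σ t)
    (fun s => if 2*s = i+1 then (1:ℝ) else 0)]
  rw [sum_const_perm]

lemma Q_rec (i : ℕ) (hi2 : 2 ≤ i) (hin : i ≤ n) :
    (i:ℝ) * ∑ σ : Equiv.Perm (Fin n), Fi i σ * (relRank σ i : ℝ)
      = (n.factorial:ℝ) * (∑ s ∈ Finset.Icc 1 i, if 2*s < i+1 then (s:ℝ) else 0)
        + (∑ σ : Equiv.Perm (Fin n), Fi (i-1) σ)
          * (∑ s ∈ Finset.Icc 1 i, if 2*s = i+1 then (s:ℝ) else 0) := by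
  have hd : i - 1 < n := by omega
  have hdecomp : ∀ σ : Equiv.Perm (Fin n), Fi i σ * (relRank σ i : ℝ)
      = (1:ℝ) * (if 2 * relRank σ i < i+1 then ((relRank σ i : ℕ):ℝ) else 0)
        + Fi (i-1) σ * (if 2 * relRank σ i = i+1 then ((relRank σ i : ℕ):ℝ) else 0) := by
    intro σ
    have h := Fi_succ σ (i-1)
    rw [show i-1+1 = i by omega, show i-1+2 = i+1 by omega] at h
    rw [h, if_pos (show 2 ≤ i by omega)]
    by_cases hA : 2 * relRank σ i < i + 1
    · have hB : ¬(2 * relRank σ i = i+1) := by omega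
      rw [if_pos hA, if_pos hA, if_neg hB, if_neg hB]
      ring
    · by_cases hB : 2 * relRank σ i = i+1
      · rw [if_neg hA, if_neg hA, if_pos hB, if_pos hB]
        ring
      · rw [if_neg hA, if_neg hA, if_neg hB, if_neg hB]
        ring
  have hsplit : ∑ σ : Equiv.Perm (Fin n), Fi i σ * (relRank σ i : ℝ)
      = ∑ σ : Equiv.Perm (Fin n),
          (1:ℝ) * (if 2 * relRank σ i < i+1 then ((relRank σ i : ℕ):ℝ) else 0)
        + ∑ σ : Equiv.Perm (Fin n),
          Fi (i-1) σ * (if 2 * relRank σ i = i+1 then ((relRank σ i : ℕ):ℝ) else 0) := by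
    rw [← Finset.sum_add_distrib]
    exact Finset.sum_congr rfl (fun σ _ => hdecomp σ)
  rw [hsplit, mul_add]
  rw [rel_master i (by omega) hd (fun _ => (1:ℝ)) (fun σ t => rfl)
    (fun s => if 2*s < i+1 then ((s:ℕ):ℝ) else 0)]
  rw [rel_master i (by omega) hd (fun σ => Fi (i-1) σ) (fun σ t => Fi_Phi hd le_rfl σ t)
    (fun s => if 2*s = i+1 then ((s:ℕ):ℝ) else 0)]
  rw [sum_const_perm]

lemma cnt1 (i : ℕ) : ∑ s ∈ Finset.Icc 1 i, (if 2*s < i+1 then (1:ℝ) else 0)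
    = ((i/2 : ℕ):ℝ) := by
  rw [Finset.sum_boole]
  have h : (Finset.Icc 1 i).filter (fun s => 2*s < i+1) = Finset.Icc 1 (i/2) := by
    ext x
    simp only [Finset.mem_filter, Finset.mem_Icc]
    omega
  rw [h, Nat.card_Icc]
  simp

lemma cnt2_even (i : ℕ) (h : i % 2 = 0) :
    ∑ s ∈ Finset.Icc 1 i, (if 2*s = i+1 then (1:ℝ) else 0) = 0 := by
  apply Finset.sum_eq_zero
  intro s _
  rw [if_neg (by omega)]

lemma cnt2_odd (i : ℕ) (h : i % 2 = 1) :
    ∑ s ∈ Finset.Icc 1 i, (if 2*s = i+1 then (1:ℝ) else 0) = 1 := by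
  rw [Finset.sum_boole]
  have hf : (Finset.Icc 1 i).filter (fun s => 2*s = i+1) = {(i+1)/2} := by
    ext x
    simp only [Finset.mem_filter, Finset.mem_Icc, Finset.mem_singleton]
    omega
  rw [hf, Finset.card_singleton]
  norm_num

lemma cnt3 (i : ℕ) : ∑ s ∈ Finset.Icc 1 i, (if 2*s < i+1 then ((s:ℕ):ℝ) else 0)
    = ((i/2:ℕ):ℝ) * (((i/2:ℕ):ℝ) + 1) / 2 := by
  rw [← Finset.sum_filter]
  have h : (Finset.Icc 1 i).filter (fun s => 2*s < i+1) = Finset.Icc 1 (i/2) := by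
    ext x
    simp only [Finset.mem_filter, Finset.mem_Icc]
    omega
  rw [h, gauss]

lemma cnt4_even (i : ℕ) (h : i % 2 = 0) :
    ∑ s ∈ Finset.Icc 1 i, (if 2*s = i+1 then ((s:ℕ):ℝ) else 0) = 0 := by
  apply Finset.sum_eq_zero
  intro s _
  rw [if_neg (by omega)]

lemma cnt4_odd (i : ℕ) (h : i % 2 = 1) :
    ∑ s ∈ Finset.Icc 1 i, (if 2*s = i+1 then ((s:ℕ):ℝ) else 0) = (((i+1)/2 : ℕ):ℝ) := by
  rw [← Finset.sum_filter]
  have hf : (Finset.Icc 1 i).filter (fun s => 2*s = i+1) = {(i+1)/2} := by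
    ext x
    simp only [Finset.mem_filter, Finset.mem_Icc, Finset.mem_singleton]
    omega
  rw [hf, Finset.sum_singleton]

lemma N_val (i : ℕ) (hi2 : 2 ≤ i) :
    i ≤ n → ∑ σ : Equiv.Perm (Fin n), Fi i σ = (n.factorial:ℝ)/2 := by
  induction i, hi2 using Nat.le_induction with
  | base =>
    intro hin
    have h := N_rec 2 le_rfl hin
    rw [cnt1 2, cnt2_even 2 rfl, mul_zero, add_zero] at h
    norm_num at h
    linarith
  | succ i hi2 ih =>
    intro hin
    have h := N_rec (i+1) (by omega) hin
    rw [Nat.add_sub_cancel] at h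
    rw [ih (by omega), cnt1 (i+1)] at h
    rcases Nat.even_or_odd i with ⟨k, hk⟩ | ⟨k, hk⟩
    · -- i even, i+1 odd
      rw [cnt2_odd (i+1) (by omega), mul_one] at h
      have hq : ((i+1)/2 : ℕ) = k := by omega
      rw [hq] at h
      have hiR : ((i:ℝ)+1) ≠ 0 := by positivity
      have hk' : i = 2*k := by omega
      have hkR : (i:ℝ) = 2*k := by exact_mod_cast congrArg (Nat.cast : ℕ → ℝ) hk'
      have hcast : ((i:ℕ):ℝ) + 1 = (i:ℝ) + 1 := rfl
      push_cast at h
      field_simp at h ⊢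
      nlinarith [h, hkR]
    · -- i odd, i+1 even
      rw [cnt2_even (i+1) (by omega), mul_zero, add_zero] at h
      have hq : ((i+1)/2 : ℕ) = k+1 := by omega
      rw [hq] at h
      have hk' : i = 2*k+1 := by omega
      have hkR : (i:ℝ) = 2*k+1 := by exact_mod_cast congrArg (Nat.cast : ℕ → ℝ) hk'
      push_cast at h
      have hiR : ((i:ℝ)+1) ≠ 0 := by positivity
      field_simp at h ⊢
      nlinarith [h, hkR]

lemma Q_val_even (i : ℕ) (hi2 : 2 ≤ i) (hin : i ≤ n) (hpar : i % 2 = 0) :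
    ∑ σ : Equiv.Perm (Fin n), Fi i σ * (relRank σ i : ℝ)
      = (n.factorial:ℝ) * ((i:ℝ)+2)/8 := by
  have h := Q_rec i hi2 hin
  rw [cnt3, cnt4_even i hpar, mul_zero, add_zero] at h
  obtain ⟨k, hk⟩ : ∃ k, i = 2*k := ⟨i/2, by omega⟩
  have hq : (i/2 : ℕ) = k := by omega
  rw [hq] at h
  have hkR : (i:ℝ) = 2*(k:ℝ) := by exact_mod_cast congrArg (Nat.cast : ℕ → ℝ) hk
  have hk1 : 1 ≤ k := by omega
  have hkpos : (0:ℝ) < (k:ℝ) := by exact_mod_cast hk1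
  apply mul_left_cancel₀ (show (i:ℝ) ≠ 0 by rw [hkR]; positivity)
  rw [h, hkR]
  ring

lemma Q_val_odd (i : ℕ) (hi3 : 3 ≤ i) (hin : i ≤ n) (hpar : i % 2 = 1) :
    ∑ σ : Equiv.Perm (Fin n), Fi i σ * (relRank σ i : ℝ)
      = (n.factorial:ℝ) * ((i:ℝ)+1)^2/(8*(i:ℝ)) := by
  have h := Q_rec i (by omega) hin
  rw [cnt3, cnt4_odd i hpar, N_val (i-1) (by omega) (by omega)] at h
  obtain ⟨k, hk⟩ : ∃ k, i = 2*k+1 := ⟨i/2, by omega⟩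
  have hq : (i/2 : ℕ) = k := by omega
  have hq2 : ((i+1)/2 : ℕ) = k+1 := by omega
  rw [hq, hq2] at h
  have hkR : (i:ℝ) = 2*(k:ℝ)+1 := by exact_mod_cast congrArg (Nat.cast : ℕ → ℝ) hk
  have hipos : (0:ℝ) < (i:ℝ) := by rw [hkR]; positivity
  apply mul_left_cancel₀ (ne_of_gt hipos)
  rw [h]
  push_cast
  field_simp
  rw [hkR]
  ring

lemma D_formula (i : ℕ) (hi1 : 1 ≤ i) (hin : i + 1 ≤ n) :
    ∑ σ : Equiv.Perm (Fin n), Fi i σ * ((rnk σ (i+1):ℝ) - (rnk σ i:ℝ))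
      = (n.factorial:ℝ) * ((n:ℝ)+1)/8
        * (if i % 2 = 0 then (i:ℝ)/((i:ℝ)+1) else ((i:ℝ)-1)/(i:ℝ)) := by
  have hd : i < n := by omega
  have hP : ∀ σ t, Fi i (Phi i hd σ t) = Fi i σ := fun σ t => Fi_Phi hd le_rfl σ t
  have hS : ∀ (a b : Fin n), i ≤ a.val → i ≤ b.val →
      ∀ σ : Equiv.Perm (Fin n), Fi i (σ * Equiv.swap a b) = Fi i σ :=
    fun a b ha hb σ => Fi_swap ha hb σ
  have hsub : ∑ σ : Equiv.Perm (Fin n), Fi i σ * ((rnk σ (i+1):ℝ) - (rnk σ i:ℝ))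
      = ∑ σ : Equiv.Perm (Fin n), Fi i σ * (rnk σ (i+1):ℝ)
        - ∑ σ : Equiv.Perm (Fin n), Fi i σ * (rnk σ i:ℝ) := by
    rw [← Finset.sum_sub_distrib]
    exact Finset.sum_congr rfl (fun σ _ => by ring)
  rw [hsub]
  have h2 := V2 i hi1 hin hd (Fi i) hP hS
  have h1 := V1 i hi1 hin hd (Fi i) hP hS
  have hi1ne : ((i:ℝ)+1) ≠ 0 := by positivity
  have hA : ∑ σ : Equiv.Perm (Fin n), Fi i σ * (rnk σ (i+1):ℝ)
      = ((n:ℝ)+1) * (∑ σ : Equiv.Perm (Fin n), Fi i σ) / 2 := by linarith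
  have hB : ∑ σ : Equiv.Perm (Fin n), Fi i σ * (rnk σ i:ℝ)
      = ((n:ℝ)+1) * (∑ σ : Equiv.Perm (Fin n), Fi i σ * (relRank σ i : ℝ)) / ((i:ℝ)+1) := by
    rw [eq_div_iff hi1ne]
    linarith
  rw [hA, hB]
  rcases eq_or_lt_of_le hi1 with rfl | h2i
  · rw [sum_Fi_one, sum_FiRel_one, if_neg (by norm_num)]
    norm_num
  · have hi2 : 2 ≤ i := h2i
    rw [N_val i hi2 (by omega)]
    rcases Nat.even_or_odd i with ⟨k, hk⟩ | ⟨k, hk⟩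
    · have hpar : i % 2 = 0 := by omega
      rw [Q_val_even i hi2 (by omega) hpar, if_pos hpar]
      field_simp
      ring
    · have hpar : i % 2 = 1 := by omega
      rw [Q_val_odd i (by omega) (by omega) hpar, if_neg (by omega)]
      have hipos : (0:ℝ) < (i:ℝ) := by
        have : 1 ≤ i := hi1
        exact_mod_cast Nat.lt_of_lt_of_le Nat.zero_lt_one this
      field_simp
      ring

lemma harm_succ (k : ℕ) : harm (k+1) = harm k + 1/((k:ℝ)+1) := by
  rw [harm, harm, Finset.sum_Icc_succ_top (by omega)]
  push_cast
  ring

lemma sum_c (m : ℕ) :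
    ∑ i ∈ Finset.Icc 1 (2*m), (if i % 2 = 0 then (i:ℝ)/((i:ℝ)+1) else ((i:ℝ)-1)/(i:ℝ))
      = (2*(m:ℝ)+1) + harm m - 2*harm (2*m+1) + 1/(2*(m:ℝ)+1) := by
  induction m with
  | zero =>
    have h1 : harm 1 = 1 := by
      rw [harm]
      norm_num
    simp [harm, h1]
    norm_num
  | succ k ih =>
    have he : 2*(k+1) = (2*k+1)+1 := by ring
    rw [he, Finset.sum_Icc_succ_top (by omega), Finset.sum_Icc_succ_top (by omega), ih]
    have hh1 : harm (k+1) = harm k + 1/((k:ℝ)+1) := harm_succ k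
    have hh2 : harm (2*k+1+1+1) = harm (2*k+1) + 1/(2*(k:ℝ)+2) + 1/(2*(k:ℝ)+3) := by
      rw [harm_succ, harm_succ]
      push_cast
      ring
    rw [hh1, hh2, if_neg (by omega), if_pos (by omega)]
    push_cast
    have d1 : (2*(k:ℝ)+1) ≠ 0 := by positivity
    have d2 : (2*(k:ℝ)+2) ≠ 0 := by positivity
    have d3 : (2*(k:ℝ)+3) ≠ 0 := by positivity
    have d4 : ((k:ℝ)+1) ≠ 0 := by positivity
    field_simp
    ring

end OP

/-- For odd `n ≥ 1`, the expected profit of algorithm OP is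
`((n+1)/8) · ( n + H_{(n−1)/2} − 2·H_n + 1/n )`. -/
theorem stmt12 (n : ℕ) (hn : 1 ≤ n) (hno : Odd n) :
    expPOP n
      = (((n : ℝ) + 1) / 8) *
          ((n : ℝ) + harm ((n - 1) / 2) - 2 * harm n + 1 / (n : ℝ)) := by
  obtain ⟨m, hm⟩ := hno
  have hpt : ∀ σ : Equiv.Perm (Fin n), popProfit σ
      = ∑ i ∈ Finset.Icc 1 (n-1), OP.Fi i σ * ((rnk σ (i+1):ℝ) - (rnk σ i:ℝ)) := by
    intro σ
    unfold popProfit OP.Fi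
    apply Finset.sum_congr rfl
    intro i _
    by_cases h : opActive σ i = true
    · rw [if_pos h, if_pos h, one_mul]
    · rw [if_neg h, if_neg h, zero_mul]
  have hsum : ∑ σ : Equiv.Perm (Fin n), popProfit σ
      = ∑ i ∈ Finset.Icc 1 (n-1), ∑ σ : Equiv.Perm (Fin n),
          OP.Fi i σ * ((rnk σ (i+1):ℝ) - (rnk σ i:ℝ)) := by
    rw [Finset.sum_congr rfl (fun σ _ => hpt σ)]
    exact Finset.sum_comm
  have hDsum : ∑ σ : Equiv.Perm (Fin n), popProfit σ
      = (n.factorial:ℝ) * ((n:ℝ)+1)/8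
        * ∑ i ∈ Finset.Icc 1 (n-1),
            (if i % 2 = 0 then (i:ℝ)/((i:ℝ)+1) else ((i:ℝ)-1)/(i:ℝ)) := by
    rw [hsum, Finset.mul_sum]
    apply Finset.sum_congr rfl
    intro i hi
    obtain ⟨hi1, hi2⟩ := Finset.mem_Icc.1 hi
    exact OP.D_formula i hi1 (by omega)
  have hm2 : n - 1 = 2*m := by omega
  have hvals : ∑ i ∈ Finset.Icc 1 (n-1),
      (if i % 2 = 0 then (i:ℝ)/((i:ℝ)+1) else ((i:ℝ)-1)/(i:ℝ))
      = (2*(m:ℝ)+1) + harm m - 2*harm (2*m+1) + 1/(2*(m:ℝ)+1) := by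
    rw [hm2]
    exact OP.sum_c m
  have hfac : (n.factorial : ℝ) ≠ 0 := by
    exact_mod_cast (Nat.factorial_pos n).ne'
  unfold expPOP
  rw [hDsum, hvals]
  have hnm : (n:ℝ) = 2*(m:ℝ)+1 := by exact_mod_cast congrArg (Nat.cast : ℕ → ℝ) hm
  have hd2 : (n-1)/2 = m := by omega
  have hh : harm ((n-1)/2) = harm m := by rw [hd2]
  have hhn : harm n = harm (2*m+1) := by rw [hm]
  rw [hh, hhn, hnm]
  field_simp
end
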